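/- arXiv:2312.09974 — 5 statements merged into one kernel-verified Lean document; each statement's English description precedes it below -/
import Mathlib

section
/- Let u be an irrational real number, z a point of the complex upper half-plane, and (γ_k) a sequence of matrices in SL_2(ℤ) with entries a_k, b_k, c_k, d_k such that γ_k·z → u as k → ∞ (under the Möbius action). Then |c_k| → ∞ as k → ∞. -/
/-!
Since `Im (γ_k • z) = Im z / |c_k z + d_k|²` tends to `0`, the denominators `c_k z + d_k` leave
every bounded set, and the determinant identity `c_k (γ_k • z) - a_k = -1 / (c_k z + d_k)` shows
that `c_k (γ_k • z) - a_k → 0`. If `c_k` took a value `c ≠ 0` infinitely often, the integers `a_k`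
would accumulate at the irrational number `c u`. If `c_k = 0`, then `γ_k = ±Tⁿ` preserves
`Im z > 0`, which is incompatible with `Im (γ_k • z) → 0` for infinitely many `k`.
-/

open Filter Matrix

open UpperHalfPlane
open scoped MatrixGroups Topology

lemma UpperHalfPlane.tendsto_im_zero_of_tendsto_ofReal {ι : Type*} {l : Filter ι} {f : ι → ℍ}
    {u : ℝ} (h : Tendsto (fun k => (f k : ℂ)) l (𝓝 u)) : Tendsto (fun k => (f k).im) l (𝓝 0) := by
  have := (Complex.continuous_im.tendsto (u : ℂ)).comp h
  rwa [Complex.ofReal_im] at this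

lemma Int.tendsto_abs_cofinite_atTop : Tendsto (|·|) (cofinite : Filter ℤ) atTop :=
  Int.cofinite_eq ▸ tendsto_abs_atBot_atTop.sup tendsto_abs_atTop_atTop

namespace ModularGroup

lemma coe_smul_eq_div (g : SL(2, ℤ)) (τ : ℍ) :
    ((g • τ : ℍ) : ℂ) = ((g 0 0 : ℂ) * τ + g 0 1) / (g 1 0 * τ + g 1 1) := by
  simp only [coe_specialLinearGroup_apply, algebraMap_int_eq, eq_intCast, Complex.ofReal_intCast]

lemma c_mul_smul_sub_a (g : SL(2, ℤ)) (τ : ℍ) :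
    (g 1 0 : ℂ) * (g • τ : ℍ) - g 0 0 = -(denom g τ)⁻¹ := by
  have hdet : (g 0 0 * g 1 1 - g 0 1 * g 1 0 : ℂ) = 1 := by
    exact_mod_cast (det_fin_two (g : Matrix (Fin 2) (Fin 2) ℤ)).symm.trans g.det_coe
  have hD : (g 1 0 * τ + g 1 1 : ℂ) ≠ 0 := denom_ne_zero g τ
  rw [coe_smul_eq_div, denom_apply]
  field_simp
  linear_combination -hdet

lemma im_smul_of_c_eq_zero {g : SL(2, ℤ)} (hc : g 1 0 = 0) (τ : ℍ) : (g • τ).im = τ.im := by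
  obtain ⟨n, hn⟩ := exists_eq_T_zpow_of_c_eq_zero hc
  rw [hn, modular_T_zpow_smul, vadd_im]

variable {ι : Type*} {l : Filter ι} {g : ι → SL(2, ℤ)} {τ : ℍ}

lemma tendsto_denom_cobounded_of_tendsto_im_zero (h : Tendsto (fun k => (g k • τ).im) l (𝓝 0)) :
    Tendsto (fun k => denom (g k) τ) l (Bornology.cobounded ℂ) := by
  have hpos : Tendsto (fun k => (g k • τ).im) l (𝓝[>] 0) :=
    tendsto_nhdsWithin_of_tendsto_nhds_of_eventually_within _ h
      (Eventually.of_forall fun k => (g k • τ).im_pos)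
  have hnormSq : Tendsto (fun k => Complex.normSq (denom (g k) τ)) l atTop := by
    refine (hpos.inv_tendsto_nhdsGT_zero.const_mul_atTop τ.im_pos).congr fun k => ?_
    rw [Pi.inv_apply, im_smul_eq_div_normSq, inv_div, mul_div_cancel₀ _ τ.im_pos.ne']
  exact tendsto_norm_atTop_iff_cobounded.1 (Real.tendsto_sqrt_atTop.comp hnormSq)

lemma tendsto_c_mul_smul_sub_a_of_tendsto_im_zero (h : Tendsto (fun k => (g k • τ).im) l (𝓝 0)) :
    Tendsto (fun k => (g k 1 0 : ℂ) * (g k • τ : ℍ) - g k 0 0) l (𝓝 0) := by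
  have := (tendsto_inv₀_cobounded.comp (tendsto_denom_cobounded_of_tendsto_im_zero h)).neg
  rw [neg_zero] at this
  exact this.congr fun k => (c_mul_smul_sub_a (g k) τ).symm

lemma eventually_c_ne_zero_of_tendsto_im_zero (h : Tendsto (fun k => (g k • τ).im) l (𝓝 0)) :
    ∀ᶠ k in l, g k 1 0 ≠ 0 :=
  (h.eventually (gt_mem_nhds τ.im_pos)).mono fun _ hk hc => hk.ne (im_smul_of_c_eq_zero hc τ)

lemma eventually_c_ne_of_tendsto_irrational {u : ℝ} (hu : Irrational u)
    (h : Tendsto (fun k => ((g k • τ : ℍ) : ℂ)) l (𝓝 u)) {c : ℤ} (hc : c ≠ 0) :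
    ∀ᶠ k in l, g k 1 0 ≠ c := by
  by_contra! hfreq
  rw [frequently_iff_neBot] at hfreq
  set l' := l ⊓ 𝓟 {k | g k 1 0 = c}
  have hl' : l' ≤ l := inf_le_left
  have ha : Tendsto (fun k => (g k 0 0 : ℂ)) l' (𝓝 (c * u)) := by
    have := ((h.mono_left hl').const_mul (c : ℂ)).sub
      (tendsto_c_mul_smul_sub_a_of_tendsto_im_zero
        ((tendsto_im_zero_of_tendsto_ofReal h).mono_left hl'))
    refine (sub_zero ((c : ℂ) * u) ▸ this).congr' ?_
    filter_upwards [mem_inf_of_right (mem_principal_self _)] with k hk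
    rw [hk]
    ring
  have hre : Tendsto (fun k => (g k 0 0 : ℝ)) l' (𝓝 (c * u)) := by
    simpa [Function.comp_def] using (Complex.continuous_re.tendsto _).comp ha
  obtain ⟨m, hm⟩ := Int.isClosedEmbedding_coe_real.isClosed_range.mem_of_tendsto hre
    (Eventually.of_forall fun k => Set.mem_range_self _)
  exact (hu.intCast_mul hc).ne_int m hm.symm

lemma tendsto_c_cofinite_of_tendsto_irrational {u : ℝ} (hu : Irrational u)
    (h : Tendsto (fun k => ((g k • τ : ℍ) : ℂ)) l (𝓝 u)) :
    Tendsto (fun k => g k 1 0) l cofinite := by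
  refine le_cofinite_iff_eventually_ne.2 fun c => ?_
  rcases eq_or_ne c 0 with rfl | hc
  · exact eventually_c_ne_zero_of_tendsto_im_zero (tendsto_im_zero_of_tendsto_ofReal h)
  · exact eventually_c_ne_of_tendsto_irrational hu h hc

end ModularGroup

open ModularGroup in
/-- If `γ_k ∈ SL₂(ℤ)` and `γ_k · z → u` with `u` irrational, then `|c_k| → ∞`. -/
theorem abs_c_tendsto_atTop_of_moebius_tendsto_irrational
    (u : ℝ) (hu : Irrational u) (z : ℂ) (hz : 0 < z.im)
    (γ : ℕ → Matrix.SpecialLinearGroup (Fin 2) ℤ)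
    (hconv : Tendsto (fun k =>
        (((γ k : Matrix (Fin 2) (Fin 2) ℤ) 0 0 : ℂ) * z + ((γ k : Matrix (Fin 2) (Fin 2) ℤ) 0 1 : ℂ)) /
        (((γ k : Matrix (Fin 2) (Fin 2) ℤ) 1 0 : ℂ) * z + ((γ k : Matrix (Fin 2) (Fin 2) ℤ) 1 1 : ℂ)))
      atTop (nhds (u : ℂ))) :
    Tendsto (fun k => |((γ k : Matrix (Fin 2) (Fin 2) ℤ) 1 0)|) atTop atTop := by
  have h : Tendsto (fun k => ((γ k • (⟨z, hz⟩ : ℍ) : ℍ) : ℂ)) atTop (𝓝 u) := by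
    simpa only [coe_smul_eq_div] using hconv
  exact Int.tendsto_abs_cofinite_atTop.comp (tendsto_c_cofinite_of_tendsto_irrational hu h)
end

section
/- Write F(X, Y_0, W²Y_1, W⁴Y_2 + 2CW³Y_1) = Σ_{k=0}^{N} p_k(X, C, Y)·W^k for a nonzero F ∈ ℂ[X,Y_0,Y_1,Y_2], and let k_0 be minimal with p_{k_0} ≠ 0. Then p_{k_0} equals the sum of the terms of minimal W-degree of F(X, Y_0, W²Y_1, 2CW³Y_1); in particular k_0 equals the j-order of F (the largest power of T dividing F(X,Y_0,T²Y_1,T³Y_2)), k_0 ≥ 2·deg_{Y_1}(p_{k_0}), and p_{k_0} does not depend on Y_2. -/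
/-!
Give `X, Y₀, Y₁, Y₂` the weights `0, 0, 2, 3`. Under each of the substitutions
`Y₁ ↦ W²Y₁` together with `Y₂ ↦ W⁴Y₂ + 2CW³Y₁`, `Y₂ ↦ 2CW³Y₁` or `Y₂ ↦ W³Y₂`, a monomial of
weight `n` becomes `Wⁿ` times a polynomial in `W`. So if `d` is the least weight of a monomial
of `F` and `H` is the weight-`d` part of `F`, all three images are divisible by `Wᵈ`, and their
`Wᵈ`-coefficients are `H(X, Y₀, Y₁, 2CY₁)`, `H(X, Y₀, Y₁, 2CY₁)` and `H` respectively. The first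
is nonzero since the change of variables `C = Y₂/(2Y₁)` turns it back into `H`. Hence `k₀ = d`
is the `j`-order of `F` and `p_{k₀} = H(X, Y₀, Y₁, 2CY₁)`: it does not involve `Y₂`, and it is
weighted homogeneous of degree `d` for the weights `0, 1, 0, 2` of `X, C, Y₀, Y₁`, so
`2 deg_{Y₁} p_{k₀} ≤ d`.
-/

open MvPolynomial Finset

open scoped Polynomial

namespace MvPolynomial.IsWeightedHomogeneous

theorem aeval {σ τ R S M : Type*} [CommSemiring R] [CommSemiring S] [Algebra R S]
    [AddCommMonoid M] {w : σ → M} {w' : τ → M} {φ : MvPolynomial σ R} {n : M}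
    (hφ : φ.IsWeightedHomogeneous w n) {g : σ → MvPolynomial τ S}
    (hg : ∀ i, (g i).IsWeightedHomogeneous w' (w i)) :
    (MvPolynomial.aeval g φ).IsWeightedHomogeneous w' n := by
  rw [aeval_def, eval₂_eq]
  refine IsWeightedHomogeneous.sum _ _ _ fun m hm => ?_
  rw [← zero_add n, MvPolynomial.algebraMap_apply]
  refine (isWeightedHomogeneous_C _ _).mul ?_
  rw [← hφ (mem_support_iff.mp hm), Finsupp.weight_apply, Finsupp.sum]
  exact IsWeightedHomogeneous.prod _ _ _ fun i _ => (hg i).pow _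

theorem mul_degreeOf_le {σ R : Type*} [CommSemiring R] {w : σ → ℕ} {φ : MvPolynomial σ R}
    {n : ℕ} (hφ : φ.IsWeightedHomogeneous w n) (i : σ) : w i * degreeOf i φ ≤ n := by
  rcases Nat.eq_zero_or_pos (w i) with hw | hw
  · simp [hw]
  suffices degreeOf i φ ≤ n / w i by rw [mul_comm]; exact (Nat.le_div_iff_mul_le hw).mp this
  refine degreeOf_le_iff.mpr fun u hu => (Nat.le_div_iff_mul_le hw).mpr ?_
  rw [← hφ (mem_support_iff.mp hu), Finsupp.weight_apply]
  by_cases hui : u i = 0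
  · simp [hui]
  exact Finset.single_le_sum (f := fun j => u j • w j) (fun j _ => Nat.zero_le _)
    (Finsupp.mem_support_iff.mpr hui)

end MvPolynomial.IsWeightedHomogeneous

section InitialForm

variable {ι R A : Type*} [CommSemiring R] [CommSemiring A] [Algebra R A] (w : ι → ℕ)
  (τ : ι → A[X])

theorem aeval_X_pow_mul_monomial (m : ι →₀ ℕ) (r : R) :
    aeval (fun i => Polynomial.X ^ w i * τ i) (monomial m r) =
      Polynomial.X ^ Finsupp.weight w m * aeval τ (monomial m r) := by
  simp only [aeval_monomial, mul_pow, Finsupp.weight_apply, Finsupp.prod, Finsupp.sum,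
    Finset.prod_mul_distrib, ← pow_mul', ← Finset.prod_pow_eq_pow_sum, smul_eq_mul]
  ring

variable {w} {F : MvPolynomial ι R} {d : ℕ}

theorem X_pow_dvd_aeval_X_pow_mul (hd : ∀ m ∈ F.support, d ≤ Finsupp.weight w m) :
    Polynomial.X ^ d ∣ aeval (fun i => Polynomial.X ^ w i * τ i) F := by
  rw [← F.support_sum_monomial_coeff, map_sum]
  refine Finset.dvd_sum fun m hm => ?_
  rw [aeval_X_pow_mul_monomial]
  exact dvd_mul_of_dvd_left (pow_dvd_pow _ (hd m hm)) _

theorem coeff_aeval_X_pow_mul (hd : ∀ m ∈ F.support, d ≤ Finsupp.weight w m) :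
    (aeval (fun i => Polynomial.X ^ w i * τ i) F).coeff d =
      aeval (fun i => (τ i).coeff 0) (weightedHomogeneousComponent w d F) := by
  classical
  conv_lhs => rw [← F.support_sum_monomial_coeff]
  rw [map_sum, Polynomial.finsetSum_coeff, weightedHomogeneousComponent_apply, map_sum,
    Finset.sum_filter]
  refine Finset.sum_congr rfl fun m hm => ?_
  rw [aeval_X_pow_mul_monomial, Polynomial.coeff_X_pow_mul']
  by_cases h : Finsupp.weight w m = d
  · rw [if_pos h.le, if_pos h, h, Nat.sub_self, Polynomial.coeff_zero_eq_aeval_zero,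
      ← AlgHom.restrictScalars_apply R, comp_aeval_apply]
    simp only [AlgHom.restrictScalars_apply, ← Polynomial.coeff_zero_eq_aeval_zero]
  · rw [if_neg (fun h' => h (le_antisymm h' (hd m hm))), if_neg h]

theorem exists_le_weight_and_weightedHomogeneousComponent_ne_zero (w : ι → ℕ) (hF : F ≠ 0) :
    ∃ d, (∀ m ∈ F.support, d ≤ Finsupp.weight w m) ∧ weightedHomogeneousComponent w d F ≠ 0 := by
  classical
  obtain ⟨m₀, hm₀, hmin⟩ :=
    F.support.exists_min_image (Finsupp.weight w) (support_nonempty.mpr hF)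
  refine ⟨_, hmin, fun h => mem_support_iff.mp hm₀ ?_⟩
  simpa [coeff_weightedHomogeneousComponent] using congrArg (coeff m₀) h

end InitialForm

theorem lowest_nonzero_eq_of_eq_sum_C_mul_X_pow {A : Type*} [Semiring A] {P : A[X]} {p : ℕ → A}
    {N d k₀ : ℕ} (hP : P = ∑ k ∈ range (N + 1), Polynomial.C (p k) * Polynomial.X ^ k)
    (hlow : ∀ k < d, P.coeff k = 0) (hd : P.coeff d ≠ 0) (hk₀ : p k₀ ≠ 0)
    (hmin : ∀ k < k₀, p k = 0) : k₀ = d ∧ p k₀ = P.coeff d := by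
  have hcoeff : ∀ n, P.coeff n = if n < N + 1 then p n else 0 := fun n => by
    simp [hP, Polynomial.finsetSum_coeff]
  have hdN : d < N + 1 := by
    by_contra h
    exact hd (by rw [hcoeff, if_neg h])
  have hk₀d : k₀ ≤ d := by
    by_contra! h
    exact hd (by rw [hcoeff, if_pos hdN, hmin d h])
  obtain rfl : k₀ = d := by
    by_contra h
    have := hlow k₀ (lt_of_le_of_ne hk₀d h)
    rw [hcoeff, if_pos (by omega)] at this
    exact hk₀ this
  rw [hcoeff, if_pos hdN]
  exact ⟨rfl, rfl⟩

section EvalAt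

variable {κ K : Type*} [CommRing K]

noncomputable def evalAt (x : κ → K) (t : K) : (MvPolynomial κ K)[X] →ₐ[K] K :=
  (Polynomial.aeval t).comp (Polynomial.mapAlgHom (MvPolynomial.aeval x))

theorem evalAt_apply (x : κ → K) (t : K) (P : (MvPolynomial κ K)[X]) :
    evalAt x t P = (P.map (eval x)).eval t := by
  simp [evalAt]

theorem evalAt_aeval {ι : Type*} (x : κ → K) (t : K) (s : ι → (MvPolynomial κ K)[X])
    (F : MvPolynomial ι K) : evalAt x t (aeval s F) = eval (fun i => evalAt x t (s i)) F := by
  rw [comp_aeval_apply, MvPolynomial.aeval_eq_eval]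

theorem eval_polynomialEval_X (x : κ → K) (j : κ) (H : (MvPolynomial κ K)[X]) :
    eval x (H.eval (X j)) = evalAt x (x j) H := by
  rw [evalAt_apply, Polynomial.eval_map, Polynomial.eval, Polynomial.hom_eval₂, eval_X]
  rfl

theorem ext_evalAt [IsDomain K] [Infinite K] {P Q : (MvPolynomial κ K)[X]}
    (h : ∀ x t, evalAt x t P = evalAt x t Q) : P = Q := by
  ext n : 1
  refine MvPolynomial.funext fun x => ?_
  have hx : P.map (eval x) = Q.map (eval x) :=
    Polynomial.funext fun t => by simpa only [evalAt_apply] using h x t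
  simpa only [Polynomial.coeff_map] using congrArg (Polynomial.coeff · n) hx

theorem exists_evalAt_eq_eval_coeff_mul_pow_add {P : (MvPolynomial κ K)[X]} {d : ℕ}
    (hP : Polynomial.X ^ d ∣ P) (x : κ → K) :
    ∃ q : K[X], (∀ i ≤ d, q.coeff i = 0) ∧
      ∀ t, evalAt x t P = eval x (P.coeff d) * t ^ d + q.eval t := by
  refine ⟨(P - Polynomial.C (P.coeff d) * Polynomial.X ^ d).map (eval x), fun i hi => ?_,
    fun t => ?_⟩
  · rw [Polynomial.coeff_map, Polynomial.coeff_sub, Polynomial.coeff_C_mul_X_pow]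
    rcases hi.lt_or_eq with hi | rfl
    · rw [Polynomial.X_pow_dvd_iff.mp hP i hi, if_neg hi.ne, sub_zero, map_zero]
    · rw [if_pos rfl, sub_self, map_zero]
  · simp [evalAt_apply]

end EvalAt

namespace GenericTransform

def jWeight : Fin 4 → ℕ := ![0, 0, 2, 3]

noncomputable def weightedSubst (τ : Fin 4 → (MvPolynomial (Fin 5) ℂ)[X]) :
    MvPolynomial (Fin 4) ℂ →ₐ[ℂ] (MvPolynomial (Fin 5) ℂ)[X] :=
  aeval fun i => Polynomial.X ^ jWeight i * τ i

/-- `Γ = weightedSubst gammaCoeff`, from `W⁴Y₂ + 2CW³Y₁ = W³ (W Y₂ + 2CY₁)`. -/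
noncomputable def gammaCoeff : Fin 4 → (MvPolynomial (Fin 5) ℂ)[X] :=
  ![Polynomial.C (X 0), Polynomial.C (X 2), Polynomial.C (X 3),
    Polynomial.X * Polynomial.C (X 4) + Polynomial.C (2 * X 1 * X 3)]

noncomputable def initialSubst : Fin 4 → MvPolynomial (Fin 5) ℂ := ![X 0, X 2, X 3, 2 * X 1 * X 3]

theorem coeff_zero_gammaCoeff : (fun i => (gammaCoeff i).coeff 0) = initialSubst := by
  funext i
  fin_cases i <;> simp [gammaCoeff, initialSubst]

theorem eval_aeval_initialSubst (H : MvPolynomial (Fin 4) ℂ) (x : Fin 5 → ℂ) :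
    eval x (aeval initialSubst H) = eval ![x 0, x 2, x 3, 2 * x 1 * x 3] H := by
  rw [← MvPolynomial.aeval_eq_eval, comp_aeval_apply]
  refine congrArg (fun v => eval v H) (funext fun i => ?_)
  fin_cases i <;> simp [initialSubst]

theorem aeval_initialSubst_ne_zero {H : MvPolynomial (Fin 4) ℂ} (hH : H ≠ 0) :
    aeval initialSubst H ≠ 0 := by
  obtain ⟨y, hy⟩ : ∃ y, eval y (X 2 * H) ≠ 0 := by
    by_contra! h
    exact mul_ne_zero (X_ne_zero 2) hH (MvPolynomial.funext fun y => by simp [h y])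
  rw [eval_mul, eval_X] at hy
  have hy2 : y 2 ≠ 0 := left_ne_zero_of_mul hy
  intro h
  apply right_ne_zero_of_mul hy
  -- the change of variables `C = Y₂ / (2Y₁)` undoes `Y₂ ↦ 2CY₁`
  have hback := eval_aeval_initialSubst H ![y 0, y 3 / (2 * y 2), y 1, y 2, 0]
  rw [h, map_zero] at hback
  refine (congrArg (fun v => eval v H) (funext fun i => ?_)).trans hback.symm
  fin_cases i <;> simp
  field_simp

theorem isWeightedHomogeneous_aeval_initialSubst {H : MvPolynomial (Fin 4) ℂ} {d : ℕ}
    (hH : H.IsWeightedHomogeneous jWeight d) :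
    (aeval initialSubst H).IsWeightedHomogeneous ![0, 1, 0, 2, 3] d := by
  refine hH.aeval fun i => ?_
  fin_cases i
  iterate 3 exact isWeightedHomogeneous_X _ _ _
  · have h := ((isWeightedHomogeneous_X ℂ ![0, 1, 0, 2, 3] 1).mul
      (isWeightedHomogeneous_X ℂ ![0, 1, 0, 2, 3] 3)).C_mul 2
    simpa [initialSubst, jWeight, mul_assoc, map_ofNat] using h

section

variable (F : MvPolynomial (Fin 4) ℂ)

theorem evalAt_weightedSubst_gammaCoeff (x : Fin 5 → ℂ) (w : ℂ) :
    evalAt x w (weightedSubst gammaCoeff F) =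
      eval ![x 0, x 2, w ^ 2 * x 3, w ^ 4 * x 4 + 2 * x 1 * w ^ 3 * x 3] F := by
  rw [weightedSubst, evalAt_aeval]
  refine congrArg (fun v => eval v F) (funext fun i => ?_)
  fin_cases i <;> simp [gammaCoeff, jWeight, evalAt_apply] <;> ring

theorem evalAt_weightedSubst_initialSubst (x : Fin 5 → ℂ) (w : ℂ) :
    evalAt x w (weightedSubst (fun i => Polynomial.C (initialSubst i)) F) =
      eval ![x 0, x 2, w ^ 2 * x 3, 2 * x 1 * w ^ 3 * x 3] F := by
  rw [weightedSubst, evalAt_aeval]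
  refine congrArg (fun v => eval v F) (funext fun i => ?_)
  fin_cases i <;> simp [initialSubst, jWeight, evalAt_apply] <;> ring

theorem evalAt_weightedSubst_succ (x : Fin 5 → ℂ) (w : ℂ) :
    evalAt x w (weightedSubst (fun i => Polynomial.C (X i.succ)) F) =
      eval ![x 1, x 2, w ^ 2 * x 3, w ^ 3 * x 4] F := by
  rw [weightedSubst, evalAt_aeval]
  refine congrArg (fun v => eval v F) (funext fun i => ?_)
  fin_cases i <;> simp [jWeight, evalAt_apply] <;> ring

theorem exists_eq_pow_mul_iff_X_pow_dvd (k : ℕ) :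
    (∃ G : MvPolynomial (Fin 5) ℂ, ∀ t x y0 y1 y2 : ℂ,
        eval ![x, y0, t ^ 2 * y1, t ^ 3 * y2] F = t ^ k * eval ![t, x, y0, y1, y2] G) ↔
      Polynomial.X ^ k ∣ weightedSubst (fun i => Polynomial.C (X i.succ)) F := by
  constructor
  · rintro ⟨G, hG⟩
    refine ⟨aeval ![Polynomial.X, Polynomial.C (X 1), Polynomial.C (X 2), Polynomial.C (X 3),
      Polynomial.C (X 4)] G, ext_evalAt fun x t => ?_⟩
    rw [evalAt_weightedSubst_succ, hG, map_mul, map_pow, evalAt_aeval]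
    congr 1
    · simp [evalAt_apply]
    · refine congrArg (fun v => eval v G) (funext fun i => ?_)
      fin_cases i <;> simp [evalAt_apply]
  · rintro ⟨H, hH⟩
    refine ⟨H.eval (X 0), fun t x y0 y1 y2 => ?_⟩
    have h := evalAt_weightedSubst_succ F ![t, x, y0, y1, y2] t
    simp only [Matrix.cons_val] at h
    rw [← h, hH, map_mul, map_pow, eval_polynomialEval_X]
    simp [evalAt_apply]

variable {F}

theorem weightedSubst_gammaCoeff_eq_sum {N : ℕ} {p : ℕ → MvPolynomial (Fin 5) ℂ}
    (hrep : ∀ x w c y0 y1 y2 : ℂ,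
      eval ![x, y0, w ^ 2 * y1, w ^ 4 * y2 + 2 * c * w ^ 3 * y1] F =
        ∑ k ∈ range (N + 1), eval ![x, c, y0, y1, y2] (p k) * w ^ k) :
    weightedSubst gammaCoeff F = ∑ k ∈ range (N + 1), Polynomial.C (p k) * Polynomial.X ^ k := by
  refine ext_evalAt fun x w => ?_
  have hx : ![x 0, x 1, x 2, x 3, x 4] = x := FinVec.etaExpand_eq x
  rw [evalAt_weightedSubst_gammaCoeff]
  simpa [evalAt_apply, hx] using hrep (x 0) w (x 1) (x 2) (x 3) (x 4)

theorem X_pow_dvd_weightedSubst (τ : Fin 4 → (MvPolynomial (Fin 5) ℂ)[X]) {d : ℕ}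
    (hd : ∀ m ∈ F.support, d ≤ Finsupp.weight jWeight m) :
    Polynomial.X ^ d ∣ weightedSubst τ F :=
  X_pow_dvd_aeval_X_pow_mul τ hd

theorem coeff_weightedSubst (τ : Fin 4 → (MvPolynomial (Fin 5) ℂ)[X]) {d : ℕ}
    (hd : ∀ m ∈ F.support, d ≤ Finsupp.weight jWeight m) :
    (weightedSubst τ F).coeff d =
      aeval (fun i => (τ i).coeff 0) (weightedHomogeneousComponent jWeight d F) :=
  coeff_aeval_X_pow_mul τ hd

theorem not_X_pow_succ_dvd_weightedSubst_succ {d : ℕ}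
    (hd : ∀ m ∈ F.support, d ≤ Finsupp.weight jWeight m)
    (hH : weightedHomogeneousComponent jWeight d F ≠ 0) :
    ¬ Polynomial.X ^ (d + 1) ∣ weightedSubst (fun i => Polynomial.C (X i.succ)) F := by
  intro h
  have hcoeff := Polynomial.X_pow_dvd_iff.mp h d d.lt_succ_self
  rw [coeff_weightedSubst _ hd] at hcoeff
  simp only [Polynomial.coeff_C_zero] at hcoeff
  refine hH (rename_injective _ (Fin.succ_injective _) ?_)
  rwa [rename_eq_aeval, map_zero]

end

end GenericTransform

open GenericTransform in
/-- Writing `F(X, Y₀, W²Y₁, W⁴Y₂ + 2CW³Y₁) = Σ_{k≤N} p_k(X,C,Y)·W^k` and letting `k₀` be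
minimal with `p_{k₀} ≠ 0`: then `p_{k₀}` is the sum of the terms of minimal `W`-degree of
`F(X, Y₀, W²Y₁, 2CW³Y₁)`, `k₀` equals the `j`-order of `F` (the largest power of `T`
dividing `F(X,Y₀,T²Y₁,T³Y₂)`), `k₀ ≥ 2·deg_{Y₁}(p_{k₀})`, and `p_{k₀}` does not depend
on `Y₂`.  Variables of `F`: `X=0, Y₀=1, Y₁=2, Y₂=3`; variables of the `p_k`:
`X=0, C=1, Y₀=2, Y₁=3, Y₂=4`; variables of `G`: `T=0, X=1, Y₀=2, Y₁=3, Y₂=4`. -/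
theorem lowest_coefficient_of_generic_transform
    (F : MvPolynomial (Fin 4) ℂ) (hF : F ≠ 0)
    (N : ℕ) (p : ℕ → MvPolynomial (Fin 5) ℂ)
    (hrep : ∀ x w c y0 y1 y2 : ℂ,
      eval (![x, y0, w ^ 2 * y1, w ^ 4 * y2 + 2 * c * w ^ 3 * y1] : Fin 4 → ℂ) F =
        ∑ k ∈ range (N + 1), eval (![x, c, y0, y1, y2] : Fin 5 → ℂ) (p k) * w ^ k)
    (k0 : ℕ) (hk0 : p k0 ≠ 0) (hk0min : ∀ k < k0, p k = 0) :
    (∀ x c y0 y1 y2 : ℂ, ∃ q : Polynomial ℂ, (∀ i ≤ k0, q.coeff i = 0) ∧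
        ∀ w : ℂ,
          eval (![x, y0, w ^ 2 * y1, 2 * c * w ^ 3 * y1] : Fin 4 → ℂ) F =
            eval (![x, c, y0, y1, y2] : Fin 5 → ℂ) (p k0) * w ^ k0 + q.eval w) ∧
    (∃ G : MvPolynomial (Fin 5) ℂ, ∀ t x y0 y1 y2 : ℂ,
        eval (![x, y0, t ^ 2 * y1, t ^ 3 * y2] : Fin 4 → ℂ) F =
          t ^ k0 * eval (![t, x, y0, y1, y2] : Fin 5 → ℂ) G) ∧
    ¬ (∃ G : MvPolynomial (Fin 5) ℂ, ∀ t x y0 y1 y2 : ℂ,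
        eval (![x, y0, t ^ 2 * y1, t ^ 3 * y2] : Fin 4 → ℂ) F =
          t ^ (k0 + 1) * eval (![t, x, y0, y1, y2] : Fin 5 → ℂ) G) ∧
    2 * degreeOf 3 (p k0) ≤ k0 ∧
    (∀ x c y0 y1 y2 y2' : ℂ,
        eval (![x, c, y0, y1, y2] : Fin 5 → ℂ) (p k0) =
          eval (![x, c, y0, y1, y2'] : Fin 5 → ℂ) (p k0)) := by
  obtain ⟨d, hd, hH⟩ := exists_le_weight_and_weightedHomogeneousComponent_ne_zero jWeight hF
  set H := weightedHomogeneousComponent jWeight d F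
  have hΓd : (weightedSubst gammaCoeff F).coeff d = aeval initialSubst H := by
    rw [coeff_weightedSubst _ hd, coeff_zero_gammaCoeff]
  obtain ⟨rfl, hpk0⟩ := lowest_nonzero_eq_of_eq_sum_C_mul_X_pow
    (weightedSubst_gammaCoeff_eq_sum hrep)
    (Polynomial.X_pow_dvd_iff.mp (X_pow_dvd_weightedSubst _ hd))
    (hΓd ▸ aeval_initialSubst_ne_zero hH) hk0 hk0min
  rw [hΓd] at hpk0
  refine ⟨fun x c y0 y1 y2 => ?_,
    (exists_eq_pow_mul_iff_X_pow_dvd F _).mpr (X_pow_dvd_weightedSubst _ hd),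
    fun h => not_X_pow_succ_dvd_weightedSubst_succ hd hH
      ((exists_eq_pow_mul_iff_X_pow_dvd F _).mp h), ?_,
    fun x c y0 y1 y2 y2' => by
      rw [hpk0, eval_aeval_initialSubst, eval_aeval_initialSubst]; rfl⟩
  · obtain ⟨q, hq, hqeval⟩ := exists_evalAt_eq_eval_coeff_mul_pow_add
      (X_pow_dvd_weightedSubst (fun i => Polynomial.C (initialSubst i)) hd) ![x, c, y0, y1, y2]
    refine ⟨q, hq, fun w => ?_⟩
    have hw := hqeval w
    rw [evalAt_weightedSubst_initialSubst, coeff_weightedSubst _ hd] at hw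
    simpa [hpk0] using hw
  · simpa [hpk0] using (isWeightedHomogeneous_aeval_initialSubst
      (weightedHomogeneousComponent_isWeightedHomogeneous _ F)).mul_degreeOf_le 3
end

section
/- Let F ∈ ℂ[X, Y_0, Y_1, Y_2] be nonzero and not of the form Y_1^s·g(X,Y_0) for any s ∈ ℕ and g ∈ ℂ[X,Y_0]. Write Γ(F)(Z,W,C,Y) = Σ_k p_k(Z,C,Y)W^k and let k_0 = ord_j(F) be minimal with p_{k_0} ≠ 0. Then deg_j(F) > 2·deg_{Y_1}(p_{k_0}), where deg_j(F) = deg_T F(X,Y_0,T²Y_1,T⁴Y_2). -/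
/-!
Give `Y₁` weight `2` and `Y₂` weight `3` (for `ord_j`) or `4` (for `deg_j`). Every `Y₁` in `Γ(F)`
comes with at least `W²`, so `2·deg_{Y₁} p_k ≤ k` for every `k`. The lowest-order part of `Γ(F)`
is the image of the lowest `(2,3)`-weighted component of `F` under `Y₂ ↦ 2CY₁`, an injective
substitution, so `k₀` is at most the least `(2,3)`-weight `μ` of a monomial of `F`, whereas
`deg_j(F)` is the largest `(2,4)`-weight. If `deg_j(F) ≤ μ`, comparing the two weights of all
monomials shows that they have no `Y₂` and a common power of `Y₁`, i.e. `F = Y₁^s·g(X,Y₀)`.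
-/

open MvPolynomial Finset
open scoped Polynomial

namespace MvPolynomial

variable {σ τ R : Type*} [CommSemiring R]

theorem eval_map_eval_aeval (f : σ → (MvPolynomial τ R)[X]) (v : τ → R) (t : R)
    (F : MvPolynomial σ R) :
    ((aeval f F).map (eval v)).eval t = eval (fun i => ((f i).map (eval v)).eval t) F := by
  induction F using MvPolynomial.induction_on with
  | C a => simp
  | add p q hp hq => simp [hp, hq]
  | mul_X p i hp => simp [hp]

theorem coeff_eq_of_forall_eval_map_eval {K : Type*} [Field K] [Infinite K]
    {P : (MvPolynomial σ K)[X]} {N : ℕ} {p : ℕ → MvPolynomial σ K}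
    (h : ∀ v t, (P.map (eval v)).eval t = ∑ k ∈ range (N + 1), eval v (p k) * t ^ k) (k : ℕ) :
    P.coeff k = if k ≤ N then p k else 0 := by
  refine MvPolynomial.funext fun v => ?_
  have hv : P.map (eval v) =
      ∑ k ∈ range (N + 1), Polynomial.C (eval v (p k)) * Polynomial.X ^ k :=
    Polynomial.funext fun t => by simp [h, Polynomial.eval_finsetSum]
  have hk := congrArg (Polynomial.coeff · k) hv
  simp only [Polynomial.coeff_map, Polynomial.finsetSum_coeff, Polynomial.coeff_C_mul_X_pow,
    Finset.sum_ite_eq, mem_range, Nat.lt_succ_iff] at hk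
  rw [hk, apply_ite (eval v), map_zero]

section WeightedSubstitution

variable {S : Type*} [CommSemiring S] [Algebra R S]

theorem aeval_X_pow_mul_monomial (w : σ → ℕ) (H : σ → S[X]) (d : σ →₀ ℕ) (a : R) :
    aeval (fun i => Polynomial.X ^ w i * H i) (monomial d a) =
      Polynomial.X ^ Finsupp.weight w d * aeval H (monomial d a) := by
  simp only [aeval_monomial, mul_pow, Finsupp.prod, Finset.prod_mul_distrib, ← pow_mul,
    Finset.prod_pow_eq_pow_sum, Finsupp.weight_apply, Finsupp.sum, smul_eq_mul, mul_comm (w _)]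
  ring

theorem aeval_X_pow_mul_eq_sum (w : σ → ℕ) (H : σ → S[X]) (F : MvPolynomial σ R) :
    aeval (fun i => Polynomial.X ^ w i * H i) F =
      ∑ d ∈ F.support, Polynomial.X ^ Finsupp.weight w d * aeval H (monomial d (coeff d F)) := by
  conv_lhs => rw [F.as_sum, map_sum]
  simp only [aeval_X_pow_mul_monomial]

theorem coeff_aeval_X_pow_mul_C_X (w : σ → ℕ) (F : MvPolynomial σ R) (n : ℕ) :
    (aeval (fun i => Polynomial.X ^ w i * Polynomial.C (X i)) F).coeff n =
      weightedHomogeneousComponent w n F := by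
  classical
  rw [aeval_X_pow_mul_eq_sum, Polynomial.finsetSum_coeff, weightedHomogeneousComponent_apply,
    Finset.sum_filter]
  refine Finset.sum_congr rfl fun d _ => ?_
  have hC : aeval (fun i => Polynomial.C (X i)) (monomial d (coeff d F)) =
      Polynomial.C (monomial d (coeff d F)) := by
    simpa using (comp_aeval_apply X
      (Polynomial.CAlgHom : MvPolynomial σ R →ₐ[R] _) (monomial d (coeff d F))).symm
  rw [hC, Polynomial.coeff_X_pow_mul', Polynomial.coeff_C]
  split_ifs <;> first | rfl | omega

theorem coeff_aeval_X_pow_mul_of_le (w : σ → ℕ) (H : σ → S[X]) (F : MvPolynomial σ R) {n : ℕ}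
    (hn : ∀ d ∈ F.support, n ≤ Finsupp.weight w d) :
    (aeval (fun i => Polynomial.X ^ w i * H i) F).coeff n =
      aeval (fun i => (H i).coeff 0) (weightedHomogeneousComponent w n F) := by
  classical
  rw [aeval_X_pow_mul_eq_sum, Polynomial.finsetSum_coeff, weightedHomogeneousComponent_apply,
    map_sum, Finset.sum_filter]
  refine Finset.sum_congr rfl fun d hd => ?_
  have hconst (G : MvPolynomial σ R) : (aeval H G).coeff 0 = aeval (fun i => (H i).coeff 0) G := by
    simp only [Polynomial.coeff_zero_eq_aeval_zero]
    exact comp_aeval_apply H ((Polynomial.aeval (0 : S)).restrictScalars R) G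
  have := hn d hd
  rw [Polynomial.coeff_X_pow_mul']
  by_cases h : Finsupp.weight w d = n
  · simp [h, hconst]
  · simp [h, show ¬ Finsupp.weight w d ≤ n by omega]

end WeightedSubstitution

theorem weightedHomogeneousComponent_weight_ne_zero {w : σ → ℕ} {F : MvPolynomial σ R}
    {d : σ →₀ ℕ} (hd : d ∈ F.support) :
    weightedHomogeneousComponent w (Finsupp.weight w d) F ≠ 0 := fun h => by
  classical
  have hcoeff := congrArg (coeff d) h
  rw [coeff_weightedHomogeneousComponent, if_pos rfl, coeff_zero] at hcoeff
  exact mem_support_iff.mp hd hcoeff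

variable (R) in
def degreeOfCoeffLESubalgebra (i : σ) (c : ℕ) : Subalgebra R (MvPolynomial σ R)[X] where
  carrier := {P | ∀ k, c * degreeOf i (P.coeff k) ≤ k}
  mul_mem' {P Q} hP hQ k := by
    rw [Polynomial.coeff_mul]
    refine (Nat.mul_le_mul_left c (degreeOf_sum_le i _ _)).trans ?_
    rw [Finset.mul_sup₀]
    refine Finset.sup_le fun x hx => ?_
    calc c * degreeOf i (P.coeff x.1 * Q.coeff x.2)
        ≤ c * degreeOf i (P.coeff x.1) + c * degreeOf i (Q.coeff x.2) := by
          rw [← mul_add]; exact Nat.mul_le_mul_left c (degreeOf_mul_le i _ _)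
      _ ≤ x.1 + x.2 := add_le_add (hP x.1) (hQ x.2)
      _ = k := mem_antidiagonal.mp hx
  add_mem' {P Q} hP hQ k := by
    rw [Polynomial.coeff_add]
    refine (Nat.mul_le_mul_left c (degreeOf_add_le i _ _)).trans ?_
    rw [← Nat.mul_max_mul_left]
    exact max_le (hP k) (hQ k)
  algebraMap_mem' a k := by
    rw [Polynomial.algebraMap_apply, Polynomial.coeff_C]
    split_ifs <;> simp

theorem mem_degreeOfCoeffLESubalgebra {i : σ} {c : ℕ} {P : (MvPolynomial σ R)[X]} :
    P ∈ degreeOfCoeffLESubalgebra R i c ↔ ∀ k, c * degreeOf i (P.coeff k) ≤ k :=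
  Iff.rfl

theorem C_mul_X_pow_mem_degreeOfCoeffLESubalgebra {i : σ} {c n : ℕ} {a : MvPolynomial σ R}
    (h : c * degreeOf i a ≤ n) :
    Polynomial.C a * Polynomial.X ^ n ∈ degreeOfCoeffLESubalgebra R i c := by
  refine mem_degreeOfCoeffLESubalgebra.mpr fun k => ?_
  rw [Polynomial.coeff_C_mul_X_pow]
  split_ifs with hk
  · exact hk ▸ h
  · simp

theorem exists_eq_X_pow_mul_rename {F : MvPolynomial σ R} {f : τ → σ}
    (hf : Function.Injective f) {i : σ} {s : ℕ}
    (h : ∀ d ∈ F.support, d i = s ∧ ∀ j ∈ d.support, j ≠ i → j ∈ Set.range f) :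
    ∃ g : MvPolynomial τ R, F = X i ^ s * rename f g := by
  classical
  have hmod : F.modMonomial (Finsupp.single i s) = 0 := by
    ext d
    by_cases hd : Finsupp.single i s ≤ d
    · rw [coeff_modMonomial_of_le _ hd, coeff_zero]
    · rw [coeff_modMonomial_of_not_le _ hd, coeff_zero, ← notMem_support_iff]
      exact fun hdF => hd (Finsupp.single_le_iff.mpr (h d hdF).1.ge)
  have hvars : ↑(F.divMonomial (Finsupp.single i s)).vars ⊆ Set.range f := by
    intro j hj
    obtain ⟨d, hd, hj⟩ := (mem_vars_iff_mem_support j).mp hj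
    obtain ⟨hi, hrange⟩ := h (Finsupp.single i s + d) (by simpa using hd)
    have hdi : d i = 0 := by simpa using hi
    refine hrange j (by simp [Finsupp.mem_support_iff.mp hj]) fun hji => ?_
    exact Finsupp.mem_support_iff.mp hj (hji ▸ hdi)
  obtain ⟨g, hg⟩ := exists_rename_eq_of_vars_subset_range _ f hf hvars
  refine ⟨g, ?_⟩
  rw [hg, X_pow_eq_monomial]
  simpa [hmod] using (divMonomial_add_modMonomial F (Finsupp.single i s)).symm

end MvPolynomial

def ordWeight : Fin 4 → ℕ := ![0, 0, 2, 3]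

def degWeight : Fin 4 → ℕ := ![0, 0, 2, 4]

noncomputable def gammaCofactor : Fin 4 → (MvPolynomial (Fin 5) ℂ)[X] :=
  ![Polynomial.C (X 0), Polynomial.C (X 2), Polynomial.C (X 3),
    Polynomial.C (2 * X 1 * X 3) + Polynomial.C (X 4) * Polynomial.X]

noncomputable def gammaMap : MvPolynomial (Fin 4) ℂ →ₐ[ℂ] (MvPolynomial (Fin 5) ℂ)[X] :=
  aeval fun i => Polynomial.X ^ ordWeight i * gammaCofactor i

noncomputable def jMap : MvPolynomial (Fin 4) ℂ →ₐ[ℂ] (MvPolynomial (Fin 4) ℂ)[X] :=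
  aeval fun i => Polynomial.X ^ degWeight i * Polynomial.C (X i)

theorem weight_ordWeight (d : Fin 4 →₀ ℕ) : Finsupp.weight ordWeight d = 2 * d 2 + 3 * d 3 := by
  simp [Finsupp.weight_apply, Finsupp.sum_fintype, Fin.sum_univ_four, ordWeight, mul_comm]

theorem weight_degWeight (d : Fin 4 →₀ ℕ) : Finsupp.weight degWeight d = 2 * d 2 + 4 * d 3 := by
  simp [Finsupp.weight_apply, Finsupp.sum_fintype, Fin.sum_univ_four, degWeight, mul_comm]

theorem eval_map_eval_gammaMap (F : MvPolynomial (Fin 4) ℂ) (v : Fin 5 → ℂ) (t : ℂ) :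
    ((gammaMap F).map (eval v)).eval t =
      eval ![v 0, v 2, t ^ 2 * v 3, t ^ 4 * v 4 + 2 * v 1 * t ^ 3 * v 3] F := by
  rw [gammaMap, eval_map_eval_aeval]
  congr 2
  funext i
  fin_cases i <;> simp [ordWeight, gammaCofactor] <;> ring

theorem eval_map_eval_jMap (F : MvPolynomial (Fin 4) ℂ) (v : Fin 4 → ℂ) (t : ℂ) :
    ((jMap F).map (eval v)).eval t = eval ![v 0, v 1, t ^ 2 * v 2, t ^ 4 * v 3] F := by
  rw [jMap, eval_map_eval_aeval]
  congr 2
  funext i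
  fin_cases i <;> simp [degWeight] <;> ring

theorem gammaMap_mem_degreeOfCoeffLESubalgebra (F : MvPolynomial (Fin 4) ℂ) :
    gammaMap F ∈ degreeOfCoeffLESubalgebra ℂ (3 : Fin 5) 2 := by
  have hdeg (j : Fin 5) : degreeOf 3 (X j : MvPolynomial (Fin 5) ℂ) = if j = 3 then 1 else 0 := by
    rw [degreeOf_X]; simp [eq_comm]
  have h3 : degreeOf 3 (2 * X 1 * X 3 : MvPolynomial (Fin 5) ℂ) ≤ 1 := by
    rw [← map_ofNat C 2, mul_assoc]
    refine ((degreeOf_C_mul_le _ _ _).trans (degreeOf_mul_X_self _ _)).trans ?_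
    simp [hdeg]
  have hgen (i : Fin 4) : Polynomial.X ^ ordWeight i * gammaCofactor i ∈
      degreeOfCoeffLESubalgebra ℂ (3 : Fin 5) 2 := by
    rw [mul_comm]
    fin_cases i
    · exact C_mul_X_pow_mem_degreeOfCoeffLESubalgebra (by simp [hdeg])
    · exact C_mul_X_pow_mem_degreeOfCoeffLESubalgebra (by simp [hdeg])
    · exact C_mul_X_pow_mem_degreeOfCoeffLESubalgebra (by simp [hdeg, ordWeight])
    · show (Polynomial.C (2 * X 1 * X 3) + Polynomial.C (X 4) * Polynomial.X) * Polynomial.X ^ 3 ∈ _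
      rw [add_mul, mul_assoc (Polynomial.C (X 4)), ← pow_succ']
      exact add_mem (C_mul_X_pow_mem_degreeOfCoeffLESubalgebra (by omega))
        (C_mul_X_pow_mem_degreeOfCoeffLESubalgebra (by simp [hdeg]))
  have hF : gammaMap F ∈ (aeval fun i => Polynomial.X ^ ordWeight i * gammaCofactor i).range :=
    AlgHom.mem_range_self _ F
  rw [aeval_range] at hF
  exact Algebra.adjoin_le (Set.range_subset_iff.mpr hgen) hF

theorem injective_aeval_constantCoeff_gammaCofactor :
    Function.Injective (aeval (R := ℂ) fun i => (gammaCofactor i).coeff 0) := by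
  let y (i : Fin 4) : FractionRing (MvPolynomial (Fin 4) ℂ) :=
    algebraMap (MvPolynomial (Fin 4) ℂ) _ (X i)
  have hy2 : y 2 ≠ 0 := IsFractionRing.to_map_ne_zero_of_mem_nonZeroDivisors
    (mem_nonZeroDivisors_of_ne_zero (X_ne_zero 2))
  -- `C ↦ Y₂ / (2Y₁)` undoes `Y₂ ↦ 2CY₁` over the fraction field.
  let φ : MvPolynomial (Fin 5) ℂ →ₐ[ℂ] FractionRing (MvPolynomial (Fin 4) ℂ) :=
    aeval ![y 0, y 3 / (2 * y 2), y 1, y 2, 0]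
  have hcomp : φ.comp (aeval fun i => (gammaCofactor i).coeff 0) =
      IsScalarTower.toAlgHom ℂ (MvPolynomial (Fin 4) ℂ) _ := by
    ext i
    change φ ((aeval fun i => (gammaCofactor i).coeff 0) (X i)) = y i
    rw [aeval_X]
    fin_cases i <;> simp [φ, gammaCofactor]
    field_simp
  refine Function.Injective.of_comp (f := φ) ?_
  rw [← AlgHom.coe_comp, hcomp]
  exact IsFractionRing.injective _ _

theorem coeff_gammaMap_ne_zero_of_forall_le {F : MvPolynomial (Fin 4) ℂ} {d₀ : Fin 4 →₀ ℕ}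
    (hd₀ : d₀ ∈ F.support)
    (hmin : ∀ d ∈ F.support, Finsupp.weight ordWeight d₀ ≤ Finsupp.weight ordWeight d) :
    (gammaMap F).coeff (Finsupp.weight ordWeight d₀) ≠ 0 := by
  rw [gammaMap, coeff_aeval_X_pow_mul_of_le _ _ _ hmin]
  exact (injective_aeval_constantCoeff_gammaCofactor.ne_iff' (map_zero _)).mpr
    (weightedHomogeneousComponent_weight_ne_zero hd₀)

theorem weight_degWeight_le_natDegree_jMap {F : MvPolynomial (Fin 4) ℂ} {d : Fin 4 →₀ ℕ}
    (hd : d ∈ F.support) : Finsupp.weight degWeight d ≤ (jMap F).natDegree := by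
  refine Polynomial.le_natDegree_of_ne_zero ?_
  rw [jMap, coeff_aeval_X_pow_mul_C_X]
  exact weightedHomogeneousComponent_weight_ne_zero hd

theorem exists_eq_X_pow_mul_rename_of_weight_le {R : Type*} [CommSemiring R]
    {F : MvPolynomial (Fin 4) R}
    (h : ∀ d ∈ F.support, ∀ d' ∈ F.support,
      Finsupp.weight degWeight d ≤ Finsupp.weight ordWeight d') :
    ∃ (s : ℕ) (g : MvPolynomial (Fin 2) R), F = X 2 ^ s * rename ![0, 1] g := by
  rcases F.support.eq_empty_or_nonempty with hF | ⟨d₀, hd₀⟩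
  · exact ⟨0, 0, by simp [support_eq_empty.mp hF]⟩
  refine ⟨d₀ 2, exists_eq_X_pow_mul_rename (by decide) fun d hd => ?_⟩
  have hdd := h d hd d hd
  have hdd₀ := h d hd d₀ hd₀
  have hd₀d := h d₀ hd₀ d hd
  rw [weight_degWeight, weight_ordWeight] at hdd hdd₀ hd₀d
  have hd3 : d 3 = 0 := by omega
  refine ⟨by omega, fun j hj hj2 => ?_⟩
  fin_cases j
  · exact ⟨0, rfl⟩
  · exact ⟨1, rfl⟩
  · exact absurd rfl hj2
  · exact absurd hd3 (Finsupp.mem_support_iff.mp hj)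

/-- Variables of `F` and `q_k`: `X=0, Y₀=1, Y₁=2, Y₂=3`; variables of `p_k`:
`X=0, C=1, Y₀=2, Y₁=3, Y₂=4`. -/
theorem j_degree_gt_twice_Y1_degree_of_lowest_coefficient_general
    (F : MvPolynomial (Fin 4) ℂ) (hF : F ≠ 0)
    (hnot : ¬ ∃ (s : ℕ) (g : MvPolynomial (Fin 2) ℂ),
      F = (X 2) ^ s * rename (![0, 1] : Fin 2 → Fin 4) g)
    (N : ℕ) (p : ℕ → MvPolynomial (Fin 5) ℂ)
    (hrep : ∀ x w c y0 y1 y2 : ℂ,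
      eval (![x, y0, w ^ 2 * y1, w ^ 4 * y2 + 2 * c * w ^ 3 * y1] : Fin 4 → ℂ) F =
        ∑ k ∈ range (N + 1), eval (![x, c, y0, y1, y2] : Fin 5 → ℂ) (p k) * w ^ k)
    (k0 : ℕ) (hk0min : ∀ k < k0, p k = 0)
    (m : ℕ) (q : ℕ → MvPolynomial (Fin 4) ℂ)
    (hq : ∀ x t y0 y1 y2 : ℂ,
      eval (![x, y0, t ^ 2 * y1, t ^ 4 * y2] : Fin 4 → ℂ) F =
        ∑ k ∈ range (m + 1), eval (![x, y0, y1, y2] : Fin 4 → ℂ) (q k) * t ^ k) :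
    2 * degreeOf 3 (p k0) < m := by
  have hΓ : ∀ k, (gammaMap F).coeff k = if k ≤ N then p k else 0 :=
    coeff_eq_of_forall_eval_map_eval fun v t => by
      rw [eval_map_eval_gammaMap, hrep, ← FinVec.etaExpand_eq v]
      rfl
  have hJ : ∀ k, (jMap F).coeff k = if k ≤ m then q k else 0 :=
    coeff_eq_of_forall_eval_map_eval fun v t => by
      rw [eval_map_eval_jMap, hq, ← FinVec.etaExpand_eq v]
      rfl
  obtain ⟨d₀, hd₀, hmin⟩ :=
    F.support.exists_min_image (Finsupp.weight ordWeight) (support_nonempty.mpr hF)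
  set μ := Finsupp.weight ordWeight d₀
  obtain ⟨hμN, hpμ⟩ : μ ≤ N ∧ p μ ≠ 0 := by
    have hμ := coeff_gammaMap_ne_zero_of_forall_le hd₀ hmin
    rw [hΓ] at hμ
    split_ifs at hμ with h
    exacts [⟨h, hμ⟩, absurd rfl hμ]
  have hk0μ : k0 ≤ μ := not_lt.mp fun h => hpμ (hk0min μ h)
  have hYk0 : 2 * degreeOf 3 (p k0) ≤ k0 := by
    simpa [hΓ, hk0μ.trans hμN] using
      mem_degreeOfCoeffLESubalgebra.mp (gammaMap_mem_degreeOfCoeffLESubalgebra F) k0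
  have hdeg : (jMap F).natDegree ≤ m :=
    Polynomial.natDegree_le_iff_coeff_eq_zero.mpr fun k hk => by
      rw [hJ, if_neg (by exact_mod_cast hk.not_ge)]
  have hk0m : k0 < m := by
    by_contra h
    exact hnot (exists_eq_X_pow_mul_rename_of_weight_le fun d hd d' hd' =>
      ((weight_degWeight_le_natDegree_jMap hd).trans hdeg).trans
        ((not_lt.mp h).trans (hk0μ.trans (hmin d' hd'))))
  omega

/-- If `F ∈ ℂ[X,Y₀,Y₁,Y₂]` is nonzero and not of the form `Y₁^s·g(X,Y₀)`, and
`Γ(F)(Z,W,C,Y) = Σ_k p_k(Z,C,Y)·W^k` with `k₀` minimal such that `p_{k₀} ≠ 0`,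
then `deg_j(F) > 2·deg_{Y₁}(p_{k₀})`, where `deg_j(F) = deg_T F(X,Y₀,T²Y₁,T⁴Y₂)`.
Variables of `F` and `q_k`: `X=0, Y₀=1, Y₁=2, Y₂=3`; variables of `p_k`:
`X=0, C=1, Y₀=2, Y₁=3, Y₂=4`. -/
theorem j_degree_gt_twice_Y1_degree_of_lowest_coefficient
    (F : MvPolynomial (Fin 4) ℂ) (hF : F ≠ 0)
    (hnot : ¬ ∃ (s : ℕ) (g : MvPolynomial (Fin 2) ℂ),
      F = (X 2) ^ s * rename (![0, 1] : Fin 2 → Fin 4) g)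
    (N : ℕ) (p : ℕ → MvPolynomial (Fin 5) ℂ)
    (hrep : ∀ x w c y0 y1 y2 : ℂ,
      eval (![x, y0, w ^ 2 * y1, w ^ 4 * y2 + 2 * c * w ^ 3 * y1] : Fin 4 → ℂ) F =
        ∑ k ∈ range (N + 1), eval (![x, c, y0, y1, y2] : Fin 5 → ℂ) (p k) * w ^ k)
    (k0 : ℕ) (hk0 : p k0 ≠ 0) (hk0min : ∀ k < k0, p k = 0)
    (m : ℕ) (q : ℕ → MvPolynomial (Fin 4) ℂ)
    (hq : ∀ x t y0 y1 y2 : ℂ,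
      eval (![x, y0, t ^ 2 * y1, t ^ 4 * y2] : Fin 4 → ℂ) F =
        ∑ k ∈ range (m + 1), eval (![x, y0, y1, y2] : Fin 4 → ℂ) (q k) * t ^ k)
    (hqm : q m ≠ 0) :
    2 * degreeOf 3 (p k0) < m :=
  j_degree_gt_twice_Y1_degree_of_lowest_coefficient_general F hF hnot N p hrep k0 hk0min m q hq
end

section
/- Let F ∈ ℂ[Y_0, Y_1, Y_2] be j-homogeneous of j-degree N, i.e. F(Y_0, T²Y_1, T⁴Y_2) = T^N F(Y_0, Y_1, Y_2). Then there exist polynomials p_{k_0}, …, p_N ∈ ℂ[Y_0,Y_1,Y_2] with p_N = F and p_{k_0} ≠ 0 of the form Y_1^ℓ·h(Y_0) with 2ℓ ≤ k_0, such that F(Y_0, W²Y_1, W⁴Y_2 + 2CW³Y_1) = C^N · Σ_{k=k_0}^{N} p_k(Y_0,Y_1,Y_2)·(W/C)^k as an identity in ℂ[Y_0,Y_1,Y_2][W, C, C^{−1}]. -/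
/-!
j-homogeneity of `F` of j-degree `N` says that every monomial `Y₀^a Y₁^b Y₂^c` of `F` has
`2b + 4c = N`. The point `(Y₀, W²Y₁, W⁴Y₂ + 2CW³Y₁)` is the weight-scaling of `(Y₀, Y₁, Y₂)` by `W`,
shifted by `2CW³Y₁` in the last coordinate, so Taylor expansion in `Y₂` gives
`Σ_j (2CW³Y₁)^j (Δ_j F)(Y₀, W²Y₁, W⁴Y₂)` with `Δ_j` the `j`-th Hasse derivative in `Y₂`.
Since `Δ_j F` is j-homogeneous of j-degree `N - 4j`, the `j`-th term is
`C^j W^(N-j) · 2^j Y₁^j Δ_j F`, i.e. `p_k = 2^(N-k) Y₁^(N-k) Δ_(N-k) F`. For `t = deg_{Y₂} F` the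
lowest term `Δ_t F` is nonzero and free of `Y₂`, so by homogeneity it is `Y₁^(N/2 - 2t) h(Y₀)`.
-/

open MvPolynomial Finset

namespace MvPolynomial

variable {σ R : Type*}

section WeightScaling

variable [CommSemiring R] {w : σ → ℕ}

theorem eval_weight_smul_monomial (t : R) (x : σ → R) (d : σ →₀ ℕ) (a : R) :
    eval (fun i => t ^ w i * x i) (monomial d a) =
      t ^ Finsupp.weight w d * eval x (monomial d a) := by
  simp only [eval_monomial, Finsupp.weight_apply, Finsupp.prod, Finsupp.sum, mul_pow,
    Finset.prod_mul_distrib, ← pow_mul, Finset.prod_pow_eq_pow_sum, smul_eq_mul, mul_comm]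
  ring

theorem IsWeightedHomogeneous.eval_weight_smul {F : MvPolynomial σ R} {m : ℕ}
    (hF : IsWeightedHomogeneous w F m) (t : R) (x : σ → R) :
    eval (fun i => t ^ w i * x i) F = t ^ m * eval x F := by
  conv_lhs => rw [F.as_sum]
  conv_rhs => rw [F.as_sum]
  simp only [map_sum, Finset.mul_sum, eval_weight_smul_monomial]
  refine Finset.sum_congr rfl fun d hd => ?_
  rw [hF (mem_support_iff.mp hd)]

end WeightScaling

theorem isWeightedHomogeneous_of_eval_weight_smul [CommRing R] [IsDomain R] [Infinite R]
    {w : σ → ℕ} {F : MvPolynomial σ R} {m : ℕ}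
    (h : ∀ (t : R) (x : σ → R), eval (fun i => t ^ w i * x i) F = t ^ m * eval x F) :
    IsWeightedHomogeneous w F m := by
  classical
  have hcomp : ∀ n ≠ m, weightedHomogeneousComponent w n F = 0 := by
    intro n hn
    refine MvPolynomial.funext fun x => ?_
    -- As a polynomial in `t`, `eval (fun i => t ^ w i * x i) F` has as `n`-th coefficient the
    -- value at `x` of the `n`-th weighted homogeneous component of `F`.
    set P : Polynomial R := ∑ d ∈ F.support,
      Polynomial.monomial (Finsupp.weight w d) (eval x (monomial d (coeff d F)))
    have hP : P = Polynomial.C (eval x F) * Polynomial.X ^ m := by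
      refine Polynomial.funext fun t => ?_
      simp only [P, Polynomial.eval_finsetSum, Polynomial.eval_monomial, Polynomial.eval_mul,
        Polynomial.eval_C, Polynomial.eval_pow, Polynomial.eval_X, mul_comm _ (t ^ _), ← h t x]
      conv_rhs => rw [F.as_sum, map_sum]
      simp only [eval_weight_smul_monomial]
    have hPn := congrArg (Polynomial.coeff · n) hP
    simp only [P, Polynomial.finsetSum_coeff, Polynomial.coeff_monomial, Polynomial.coeff_C_mul,
      Polynomial.coeff_X_pow, if_neg hn, mul_zero, ← Finset.sum_filter] at hPn
    rw [weightedHomogeneousComponent_apply, map_sum, map_zero, ← hPn]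
  intro d hd
  by_contra hne
  have hd' := coeff_weightedHomogeneousComponent (w := w) (Finsupp.weight w d) F d
  rw [hcomp _ hne, if_pos rfl, coeff_zero] at hd'
  exact hd hd'.symm

section HasseDeriv

variable [CommSemiring R]

/-- The `k`-th Hasse derivative `(1/k!) ∂ᵏ/∂Xᵢᵏ`. The truncated subtraction `d - single i k` is
harmless: where `d i < k` the binomial factor vanishes. -/
noncomputable def hasseDeriv (i : σ) (k : ℕ) (F : MvPolynomial σ R) : MvPolynomial σ R :=
  ∑ d ∈ F.support, monomial (d - Finsupp.single i k) ((d i).choose k * coeff d F)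

theorem coeff_hasseDeriv (i : σ) (k : ℕ) (F : MvPolynomial σ R) (e : σ →₀ ℕ) :
    coeff e (hasseDeriv i k F) = (e i + k).choose k * coeff (e + Finsupp.single i k) F := by
  classical
  simp only [hasseDeriv, coeff_sum, coeff_monomial]
  rw [Finset.sum_eq_single (e + Finsupp.single i k)]
  · simp
  · intro d _ hne
    split_ifs with hde
    · have hlt : d i < k := by
        by_contra! hle
        apply hne
        rw [← hde, tsub_add_cancel_of_le (Finsupp.single_le_iff.mpr hle)]
      rw [Nat.choose_eq_zero_of_lt hlt, Nat.cast_zero, zero_mul]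
    · rfl
  · intro he
    rw [notMem_support_iff.mp he, mul_zero, ite_self]

@[simp]
theorem hasseDeriv_zero (i : σ) (F : MvPolynomial σ R) : hasseDeriv i 0 F = F := by
  ext e
  simp [coeff_hasseDeriv]

theorem IsWeightedHomogeneous.hasseDeriv {w : σ → ℕ} {F : MvPolynomial σ R} {m : ℕ}
    (hF : IsWeightedHomogeneous w F m) (i : σ) (k : ℕ) :
    IsWeightedHomogeneous w (MvPolynomial.hasseDeriv i k F) (m - k * w i) := by
  intro e he
  rw [coeff_hasseDeriv] at he
  have := hF (right_ne_zero_of_mul he)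
  rw [map_add, Finsupp.weight_single, smul_eq_mul] at this
  omega

theorem IsWeightedHomogeneous.mul_le_of_hasseDeriv_ne_zero {w : σ → ℕ} {F : MvPolynomial σ R}
    {m : ℕ} (hF : IsWeightedHomogeneous w F m) {i : σ} {k : ℕ}
    (hk : MvPolynomial.hasseDeriv i k F ≠ 0) : k * w i ≤ m := by
  obtain ⟨e, he⟩ := ne_zero_iff.mp hk
  rw [coeff_hasseDeriv] at he
  have := hF (right_ne_zero_of_mul he)
  rw [map_add, Finsupp.weight_single, smul_eq_mul] at this
  omega

theorem eq_zero_of_mem_support_hasseDeriv_degreeOf {i : σ} {F : MvPolynomial σ R}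
    {e : σ →₀ ℕ} (he : e ∈ (hasseDeriv i (F.degreeOf i) F).support) : e i = 0 := by
  rw [mem_support_iff, coeff_hasseDeriv] at he
  have := monomial_le_degreeOf i (mem_support_iff.mpr (right_ne_zero_of_mul he))
  simp only [Finsupp.add_apply, Finsupp.single_eq_same] at this
  omega

theorem hasseDeriv_degreeOf_ne_zero {F : MvPolynomial σ R} (hF : F ≠ 0) (i : σ) :
    hasseDeriv i (F.degreeOf i) F ≠ 0 := by
  classical
  obtain ⟨d, hd, hdi⟩ := Finset.exists_max_image F.support (· i) (support_nonempty.mpr hF)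
  have hdeg : d i = F.degreeOf i :=
    le_antisymm (monomial_le_degreeOf i hd) (by rw [degreeOf_eq_sup]; exact Finset.sup_le hdi)
  refine ne_zero_iff.mpr ⟨d - Finsupp.single i (F.degreeOf i), ?_⟩
  rw [coeff_hasseDeriv, tsub_add_cancel_of_le (Finsupp.single_le_iff.mpr hdeg.ge)]
  simpa [hdeg] using mem_support_iff.mp hd

theorem eval_update_monomial_of_apply_eq_zero [DecidableEq σ] {i : σ} {e : σ →₀ ℕ}
    (he : e i = 0) (x : σ → R) (v a : R) :
    eval (Function.update x i v) (monomial e a) = eval x (monomial e a) := by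
  simp only [eval_monomial]
  congr 1
  refine Finsupp.prod_congr fun l hl => ?_
  rw [Function.update_of_ne (by rintro rfl; exact Finsupp.mem_support_iff.mp hl he)]

theorem eval_update_add_monomial [DecidableEq σ] (i : σ) (x : σ → R) (s a : R)
    {d : σ →₀ ℕ} {n : ℕ} (hn : d i ≤ n) :
    eval (Function.update x i (x i + s)) (monomial d a) =
      ∑ k ∈ range (n + 1),
        s ^ k * eval x (monomial (d - Finsupp.single i k) ((d i).choose k * a)) := by
  obtain ⟨e, m, he, rfl⟩ : ∃ (e : σ →₀ ℕ) (m : ℕ), e i = 0 ∧ d = e + Finsupp.single i m :=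
    ⟨d.erase i, d i, by simp, (Finsupp.erase_add_single i d).symm⟩
  simp only [Finsupp.add_apply, he, Finsupp.single_eq_same, zero_add] at hn ⊢
  have hsub : ∀ k ≤ m,
      e + Finsupp.single i m - Finsupp.single i k = e + Finsupp.single i (m - k) := by
    intro k hk
    ext l
    by_cases hl : l = i <;> simp [hl, he]
  rw [← Finset.sum_subset (range_subset_range.mpr (by omega : m + 1 ≤ n + 1))]
  · rw [monomial_add_single, map_mul, eval_update_monomial_of_apply_eq_zero he, map_pow, eval_X,
      Function.update_self, add_comm, add_pow, Finset.mul_sum]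
    refine Finset.sum_congr rfl fun k hk => ?_
    rw [hsub k (Nat.lt_succ_iff.mp (mem_range.mp hk)), monomial_add_single]
    simp only [map_mul, map_pow, eval_X, eval_monomial]
    ring
  · intro k _ hk
    rw [Nat.choose_eq_zero_of_lt (by simpa using hk), Nat.cast_zero, zero_mul, monomial_zero,
      map_zero, mul_zero]

theorem eval_update_add_eq_sum_hasseDeriv [DecidableEq σ] (F : MvPolynomial σ R) (i : σ)
    (x : σ → R) (s : R) :
    eval (Function.update x i (x i + s)) F =
      ∑ k ∈ range (F.degreeOf i + 1), s ^ k * eval x (hasseDeriv i k F) := by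
  simp only [hasseDeriv, map_sum, Finset.mul_sum]
  rw [Finset.sum_comm]
  conv_lhs => rw [F.as_sum, map_sum]
  exact Finset.sum_congr rfl fun d hd =>
    eval_update_add_monomial i x s (coeff d F) (monomial_le_degreeOf i hd)

end HasseDeriv

end MvPolynomial

section JTransform

variable {R : Type*} [CommSemiring R]

theorem weight_zero_two_four (d : Fin 3 →₀ ℕ) :
    Finsupp.weight ![0, 2, 4] d = 2 * d 1 + 4 * d 2 := by
  simp [Finsupp.weight_eq_sum, Fin.sum_univ_three, mul_comm]

theorem isWeightedHomogeneous_zero_two_four_of_eval {K : Type*} [CommRing K] [IsDomain K]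
    [Infinite K]
    {F : MvPolynomial (Fin 3) K} {N : ℕ}
    (hF : ∀ y0 y1 y2 t : K, eval ![y0, t ^ 2 * y1, t ^ 4 * y2] F = t ^ N * eval ![y0, y1, y2] F) :
    IsWeightedHomogeneous ![0, 2, 4] F N := by
  refine isWeightedHomogeneous_of_eval_weight_smul fun t x => ?_
  rw [show (fun i => t ^ ![0, 2, 4] i * x i) = ![x 0, t ^ 2 * x 1, t ^ 4 * x 2] by
    funext i; fin_cases i <;> simp, hF]
  congr 3
  funext i; fin_cases i <;> rfl

theorem eval_transform_eq_sum_hasseDeriv {F : MvPolynomial (Fin 3) R} {N : ℕ}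
    (hF : IsWeightedHomogeneous ![0, 2, 4] F N) (y0 y1 y2 w c : R) :
    eval ![y0, w ^ 2 * y1, w ^ 4 * y2 + 2 * c * w ^ 3 * y1] F =
      ∑ j ∈ range (F.degreeOf 2 + 1),
        eval ![y0, y1, y2] (C (2 ^ j) * X 1 ^ j * hasseDeriv 2 j F) * w ^ (N - j) * c ^ j := by
  set y : Fin 3 → R := fun i => w ^ ![0, 2, 4] i * ![y0, y1, y2] i
  have hy : ![y0, w ^ 2 * y1, w ^ 4 * y2 + 2 * c * w ^ 3 * y1] =
      Function.update y 2 (y 2 + 2 * c * w ^ 3 * y1) := by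
    funext i; fin_cases i <;> simp [y]
  rw [hy, eval_update_add_eq_sum_hasseDeriv]
  refine Finset.sum_congr rfl fun j _ => ?_
  by_cases hD : hasseDeriv 2 j F = 0
  · simp [hD]
  have hj : j * 4 ≤ N := by simpa using hF.mul_le_of_hasseDeriv_ne_zero hD
  rw [(hF.hasseDeriv 2 j).eval_weight_smul,
    show N - j = 3 * j + (N - j * ![0, 2, 4] 2) by simp only [Matrix.cons_val]; omega]
  simp only [map_mul, eval_C, map_pow, eval_X, Matrix.cons_val, Matrix.cons_val_one,
    Matrix.cons_val_zero]
  ring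

theorem exists_eval_eq_pow_mul_eval {G : MvPolynomial (Fin 3) R} {n : ℕ}
    (hG : ∀ e ∈ G.support, e 1 = n ∧ e 2 = 0) :
    ∃ h : Polynomial R, ∀ y0 y1 y2 : R, eval ![y0, y1, y2] G = y1 ^ n * h.eval y0 := by
  refine ⟨∑ e ∈ G.support, Polynomial.monomial (e 0) (coeff e G), fun y0 y1 y2 => ?_⟩
  conv_lhs => rw [G.as_sum]
  simp only [map_sum, Polynomial.eval_finsetSum, Finset.mul_sum, Polynomial.eval_monomial]
  refine Finset.sum_congr rfl fun e he => ?_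
  obtain ⟨h1, h2⟩ := hG e he
  rw [eval_monomial, Finsupp.prod_pow, Fin.prod_univ_three]
  simp only [Matrix.cons_val_zero, Matrix.cons_val_one, Matrix.cons_val, h1, h2, pow_zero,
    mul_one]
  ring

theorem exists_eval_hasseDeriv_degreeOf_eq_pow_mul_eval {F : MvPolynomial (Fin 3) R} {N : ℕ}
    (hF : IsWeightedHomogeneous ![0, 2, 4] F N) :
    ∃ h : Polynomial R, ∀ y0 y1 y2 : R, eval ![y0, y1, y2] (hasseDeriv 2 (F.degreeOf 2) F) =
      y1 ^ (N / 2 - 2 * F.degreeOf 2) * h.eval y0 := by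
  refine exists_eval_eq_pow_mul_eval fun e he => ?_
  have he2 := eq_zero_of_mem_support_hasseDeriv_degreeOf he
  have hwe := hF.hasseDeriv 2 (F.degreeOf 2) (mem_support_iff.mp he)
  simp only [weight_zero_two_four, Matrix.cons_val] at hwe
  omega

end JTransform

/-- For a `j`-homogeneous polynomial `F ∈ ℂ[Y₀,Y₁,Y₂]` of `j`-degree `N`, there are
polynomials `p_{k₀}, …, p_N` with `p_N = F`, `p_{k₀} ≠ 0` of the form `Y₁^ℓ·h(Y₀)` with
`2ℓ ≤ k₀`, such that `F(Y₀, W²Y₁, W⁴Y₂ + 2CW³Y₁) = Σ_{k=k₀}^{N} p_k(Y)·W^k·C^{N−k}`.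
Variables of `F`: `Y₀=0, Y₁=1, Y₂=2`. -/
theorem j_homogeneous_transform_expansion
    (F : MvPolynomial (Fin 3) ℂ) (hF : F ≠ 0) (N : ℕ)
    (hhom : ∀ y0 y1 y2 t : ℂ,
      eval (![y0, t ^ 2 * y1, t ^ 4 * y2] : Fin 3 → ℂ) F =
        t ^ N * eval (![y0, y1, y2] : Fin 3 → ℂ) F) :
    ∃ (k0 ℓ : ℕ) (p : ℕ → MvPolynomial (Fin 3) ℂ) (h : Polynomial ℂ),
      p N = F ∧ p k0 ≠ 0 ∧ k0 ≤ N ∧ 2 * ℓ ≤ k0 ∧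
      (∀ y0 y1 y2 : ℂ, eval (![y0, y1, y2] : Fin 3 → ℂ) (p k0) = y1 ^ ℓ * h.eval y0) ∧
      (∀ y0 y1 y2 w c : ℂ,
        eval (![y0, w ^ 2 * y1, w ^ 4 * y2 + 2 * c * w ^ 3 * y1] : Fin 3 → ℂ) F =
          ∑ k ∈ Finset.Icc k0 N,
            eval (![y0, y1, y2] : Fin 3 → ℂ) (p k) * w ^ k * c ^ (N - k)) := by
  have hw := isWeightedHomogeneous_zero_two_four_of_eval hhom
  obtain ⟨h, hh⟩ := exists_eval_hasseDeriv_degreeOf_eq_pow_mul_eval hw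
  set t := F.degreeOf 2 with ht_def
  have hD : hasseDeriv 2 t F ≠ 0 := hasseDeriv_degreeOf_ne_zero hF 2
  have ht : t * 4 ≤ N := by simpa using hw.mul_le_of_hasseDeriv_ne_zero hD
  set p : ℕ → MvPolynomial (Fin 3) ℂ :=
    fun k => C (2 ^ (N - k)) * X 1 ^ (N - k) * hasseDeriv 2 (N - k) F
  have hpt : p (N - t) = C (2 ^ t) * X 1 ^ t * hasseDeriv 2 t F := by
    simp only [p, Nat.sub_sub_self (by omega : t ≤ N)]
  refine ⟨N - t, N / 2 - t, p, Polynomial.C (2 ^ t) * h, by simp [p], ?_, N.sub_le t,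
    by omega, ?_, ?_⟩
  · rw [hpt]
    exact mul_ne_zero (mul_ne_zero (by simp) (pow_ne_zero _ (X_ne_zero _))) hD
  · intro y0 y1 y2
    rw [hpt]
    simp only [map_mul, eval_C, map_pow, eval_X, Matrix.cons_val_one, Matrix.cons_val_zero, hh,
      Polynomial.eval_mul, Polynomial.eval_pow, Polynomial.eval_C,
      show N / 2 - t = t + (N / 2 - 2 * t) by omega, pow_add]
    ring
  · intro y0 y1 y2 w c
    rw [eval_transform_eq_sum_hasseDeriv hw, ← ht_def]
    refine Finset.sum_nbij' (N - ·) (N - ·) ?_ ?_ ?_ ?_ ?_ <;> intro j hj <;>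
      simp only [mem_range, mem_Icc] at hj ⊢
    all_goals first | omega | simp only [p, Nat.sub_sub_self (by omega : j ≤ N)]
end

section
/- Let p ∈ ℂ[X, Y_0, Y_1, Y_2] be nonzero, let τ ∈ ℍ with j'(τ) ≠ 0, and let s be the largest integer such that (Y_0 − j(τ))^s divides p. Then the set of γ ∈ SL_2(ℤ) for which the holomorphic function z ↦ p(z, j(z), j'(z), j''(z)) has order of vanishing exactly s at z = γ·τ is Zariski dense in SL_2 (i.e., its complement in SL_2(ℤ) is contained in a proper Zariski-closed subset of SL_2(ℂ)). -/
/-!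
Write `p = (Y₀ - j τ) ^ s * r` with `Y₀ - j τ ∤ r`. At `w = γ • τ` we have `j w = j τ` and
`j' w = j' τ (cτ + d)² ≠ 0`, so `j - j τ` has a simple zero at `w`, and `p(z, j, j', j'')` vanishes
to order exactly `s` at `w` as soon as `r(w, j w, j' w, j'' w) ≠ 0`. By the transformation formulas
`j'(γτ) = j'(τ)(cτ + d)²` and `j''(γτ) = j''(τ)(cτ + d)⁴ + 2c j'(τ)(cτ + d)³`, this value is `r`
evaluated at a rational function of the entries of `γ` whose only denominator is `cτ + d`;
clearing it gives the polynomial `q`. Since `g ↦ (g • τ, cτ + d, c)` maps `SL₂(ℂ)` onto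
`ℂ × ℂˣ × ℂ`, the values of that rational function fill the set `{Y₀ = j τ, Y₁ ≠ 0}`, on which `r`
does not vanish identically because `Y₀ - j τ ∤ r`; hence `q ≠ 0` somewhere on `SL₂(ℂ)`.
-/

open MvPolynomial Filter

/-- `F` vanishes at `w` to order exactly `m`. -/
def HasZeroOfOrder (F : ℂ → ℂ) (w : ℂ) (m : ℕ) : Prop :=
  ∃ g : ℂ → ℂ, AnalyticAt ℂ g w ∧ g w ≠ 0 ∧ ∀ᶠ x in nhds w, F x = (x - w) ^ m * g x

namespace MvPolynomial

variable {σ ι K : Type*} [Field K] [DecidableEq σ]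

theorem X_sub_C_dvd_sub_bind₁_update (p : MvPolynomial σ K) (i : σ) (a : K) :
    X i - C a ∣ p - bind₁ (Function.update X i (C a)) p := by
  let I := Ideal.span {(X i - C a : MvPolynomial σ K)}
  have hcomp : (Ideal.Quotient.mkₐ K I).comp (bind₁ (Function.update X i (C a))) =
      Ideal.Quotient.mkₐ K I := by
    refine algHom_ext fun k => ?_
    rcases eq_or_ne k i with rfl | hk
    · simp only [AlgHom.comp_apply, bind₁_X_right, Function.update_self, Ideal.Quotient.mkₐ_eq_mk]
      exact (Ideal.Quotient.eq.2 (Ideal.mem_span_singleton_self _)).symm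
    · simp [hk]
  rw [← Ideal.mem_span_singleton, ← Ideal.Quotient.eq]
  exact (AlgHom.congr_fun hcomp p).symm

theorem eval_bind₁_update_C (p : MvPolynomial σ K) (i : σ) (a : K) (x : σ → K) :
    eval x (bind₁ (Function.update X i (C a)) p) = eval (Function.update x i a) p := by
  change aeval x (bind₁ _ p) = aeval _ p
  rw [aeval_bind₁]
  congr 1
  ext k
  rcases eq_or_ne k i with rfl | hk <;> simp [*]

theorem exists_eval_ne_zero_of_not_X_sub_C_dvd [Infinite K] {p : MvPolynomial σ K} {i k : σ}
    {a : K} (hp : ¬ X i - C a ∣ p) (hki : k ≠ i) :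
    ∃ y : σ → K, y i = a ∧ y k ≠ 0 ∧ eval y p ≠ 0 := by
  by_contra! h
  have hr : X k * bind₁ (Function.update X i (C a)) p = 0 := funext fun x => by
    rw [map_mul, eval_X, eval_bind₁_update_C, map_zero]
    rcases eq_or_ne (x k) 0 with hx | hx
    · rw [hx, zero_mul]
    · rw [h _ (Function.update_self ..) (by rwa [Function.update_of_ne hki]), mul_zero]
  have hdvd := X_sub_C_dvd_sub_bind₁_update p i a
  rw [(mul_eq_zero.1 hr).resolve_left (X_ne_zero k), sub_zero] at hdvd
  exact hp hdvd

theorem exists_eval_eq_pow_mul_eval_update_div (p : MvPolynomial σ K) (i₀ : σ)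
    (num den : MvPolynomial ι K) (f : σ → MvPolynomial ι K) :
    ∃ (N : ℕ) (Q : MvPolynomial ι K), ∀ e : ι → K, eval e den ≠ 0 →
      eval e Q = eval e den ^ N *
        eval (Function.update (fun i => eval e (f i)) i₀ (eval e num / eval e den)) p := by
  induction p using MvPolynomial.induction_on with
  | C a => exact ⟨0, C a, fun e _ => by simp⟩
  | add p q hp hq =>
    obtain ⟨M, P, hP⟩ := hp
    obtain ⟨N, Q, hQ⟩ := hq
    refine ⟨M + N, P * den ^ N + Q * den ^ M, fun e he => ?_⟩
    simp only [map_add, map_mul, map_pow, hP e he, hQ e he]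
    ring
  | mul_X p i hp =>
    obtain ⟨N, Q, hQ⟩ := hp
    rcases eq_or_ne i i₀ with rfl | hi
    · refine ⟨N + 1, Q * num, fun e he => ?_⟩
      simp only [map_mul, eval_X, Function.update_self, hQ e he]
      field_simp
      ring
    · exact ⟨N, Q * f i, fun e he => by simp [hQ e he, hi, mul_assoc]⟩

end MvPolynomial

open scoped MatrixGroups

theorem Matrix.SpecialLinearGroup.det_fin_two_eq_one {R : Type*} [CommRing R] (g : SL(2, R)) :
    g 0 0 * g 1 1 - g 0 1 * g 1 0 = 1 := by
  rw [← Matrix.det_fin_two]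
  exact g.det_coe

def mobiusDenom (g : SL(2, ℂ)) (z : ℂ) : ℂ := g 1 0 * z + g 1 1

noncomputable def mobius (g : SL(2, ℂ)) (z : ℂ) : ℂ := (g 0 0 * z + g 0 1) / mobiusDenom g z

theorem hasDerivAt_mobiusDenom (g : SL(2, ℂ)) (z : ℂ) :
    HasDerivAt (mobiusDenom g) (g 1 0) z :=
  ((hasDerivAt_id' z).const_mul (g 1 0)).add_const (g 1 1) |>.congr_deriv (mul_one _)

theorem hasDerivAt_mobius (g : SL(2, ℂ)) {z : ℂ} (hz : mobiusDenom g z ≠ 0) :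
    HasDerivAt (mobius g) (mobiusDenom g z ^ 2)⁻¹ z := by
  have hnum : HasDerivAt (fun z => g 0 0 * z + g 0 1) (g 0 0) z :=
    ((hasDerivAt_id' z).const_mul (g 0 0)).add_const (g 0 1) |>.congr_deriv (mul_one _)
  refine (hnum.div (hasDerivAt_mobiusDenom g z) hz).congr_deriv ?_
  rw [← one_div]
  congr 1
  simp only [mobiusDenom]
  linear_combination g.det_fin_two_eq_one

theorem im_mobius_intCast_pos (γ : SL(2, ℤ)) {z : ℂ} (hz : 0 < z.im) :
    0 < (mobius γ z).im := by
  have h : mobius γ z = ((γ • (⟨z, hz⟩ : UpperHalfPlane) : UpperHalfPlane) : ℂ) := by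
    rw [UpperHalfPlane.coe_specialLinearGroup_apply]
    simp [mobius, mobiusDenom]
  exact h ▸ UpperHalfPlane.im_pos _

theorem mobiusDenom_intCast_ne_zero (γ : SL(2, ℤ)) {z : ℂ} (hz : 0 < z.im) :
    mobiusDenom γ z ≠ 0 := fun h => by
  -- otherwise `mobius γ z = _ / 0 = 0` would not lie in the upper half plane
  have him := im_mobius_intCast_pos γ hz
  rw [mobius, h, div_zero, Complex.zero_im] at him
  exact lt_irrefl 0 him

theorem mapsTo_mobius_intCast (γ : SL(2, ℤ)) :
    Set.MapsTo (mobius γ) UpperHalfPlane.upperHalfPlaneSet UpperHalfPlane.upperHalfPlaneSet :=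
  fun _ hz => im_mobius_intCast_pos γ hz

theorem exists_mobius_eq (τ w c : ℂ) {t : ℂ} (ht : t ≠ 0) :
    ∃ g : SL(2, ℂ), g 1 0 = c ∧ mobiusDenom g τ = t ∧ mobius g τ = w := by
  -- solve `c τ + d = t`, `a τ + b = w t`, `a d - b c = 1`
  refine ⟨⟨!![t⁻¹ + w * c, w * t - (t⁻¹ + w * c) * τ; c, t - c * τ], ?_⟩, rfl, ?_, ?_⟩
  · rw [Matrix.det_fin_two_of]
    field_simp
    ring
  · simp [mobiusDenom]
  · simp [mobius, mobiusDenom]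
    field_simp

theorem deriv_mul_eq_of_comp_eventuallyEq {f g m : ℂ → ℂ} {z m' : ℂ}
    (hf : DifferentiableAt ℂ f (m z)) (hm : HasDerivAt m m' z) (h : f ∘ m =ᶠ[nhds z] g) :
    deriv f (m z) * m' = deriv g z := by
  rw [← h.deriv_eq]
  exact (hf.hasDerivAt.comp z hm).deriv.symm

section InvariantFunction

variable {f : ℂ → ℂ} {U : Set ℂ} {g : SL(2, ℂ)} {z : ℂ}

theorem deriv_comp_mobius (hU : IsOpen U) (hf : DifferentiableOn ℂ f U)
    (hden : ∀ z ∈ U, mobiusDenom g z ≠ 0) (hmaps : Set.MapsTo (mobius g) U U)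
    (hinv : ∀ z ∈ U, f (mobius g z) = f z) (hz : z ∈ U) :
    deriv f (mobius g z) = deriv f z * mobiusDenom g z ^ 2 := by
  have h := deriv_mul_eq_of_comp_eventuallyEq ((hf _ (hmaps hz)).differentiableAt
    (hU.mem_nhds (hmaps hz))) (hasDerivAt_mobius g (hden z hz))
    (eventually_of_mem (hU.mem_nhds hz) hinv)
  rw [← h]
  field_simp [hden z hz]

theorem deriv_deriv_comp_mobius (hU : IsOpen U) (hf : DifferentiableOn ℂ f U)
    (hden : ∀ z ∈ U, mobiusDenom g z ≠ 0) (hmaps : Set.MapsTo (mobius g) U U)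
    (hinv : ∀ z ∈ U, f (mobius g z) = f z) (hz : z ∈ U) :
    deriv (deriv f) (mobius g z) =
      deriv (deriv f) z * mobiusDenom g z ^ 4 + 2 * g 1 0 * deriv f z * mobiusDenom g z ^ 3 := by
  have hf' : DifferentiableOn ℂ (deriv f) U := hf.deriv hU
  have hrhs : HasDerivAt (fun z => deriv f z * mobiusDenom g z ^ 2)
      (deriv (deriv f) z * mobiusDenom g z ^ 2 + deriv f z * (2 * mobiusDenom g z * g 1 0)) z := by
    refine (((hf' z hz).differentiableAt (hU.mem_nhds hz)).hasDerivAt.mul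
      ((hasDerivAt_mobiusDenom g z).fun_pow 2)).congr_deriv ?_
    ring
  have h := deriv_mul_eq_of_comp_eventuallyEq ((hf' _ (hmaps hz)).differentiableAt
    (hU.mem_nhds (hmaps hz))) (hasDerivAt_mobius g (hden z hz))
    (eventually_of_mem (hU.mem_nhds hz) fun z hz =>
      deriv_comp_mobius hU hf hden hmaps hinv hz)
  rw [hrhs.deriv] at h
  field_simp [hden z hz] at h ⊢
  linear_combination h

end InvariantFunction

theorem hasZeroOfOrder_sub_pow_mul {f g : ℂ → ℂ} {w : ℂ} (hf : AnalyticAt ℂ f w)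
    (hf' : deriv f w ≠ 0) (hg : AnalyticAt ℂ g w) (hgw : g w ≠ 0) (s : ℕ) :
    HasZeroOfOrder (fun z => (f z - f w) ^ s * g z) w s := by
  obtain ⟨P, hP⟩ := hf
  have hslope : AnalyticAt ℂ (dslope f w) w := ⟨_, hP.has_fpower_series_dslope_fslope⟩
  refine ⟨fun z => dslope f w z ^ s * g z, (hslope.pow s).mul hg, ?_, .of_forall fun z => ?_⟩
  · simpa [dslope_same] using mul_ne_zero (pow_ne_zero s hf') hgw
  · simp only [← sub_smul_dslope f w z, smul_eq_mul, mul_pow]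
    ring

theorem analyticAt_eval_jet {j : ℂ → ℂ} {U : Set ℂ} (hj : AnalyticOnNhd ℂ j U) {w : ℂ}
    (hw : w ∈ U) (r : MvPolynomial (Fin 4) ℂ) :
    AnalyticAt ℂ (fun z => eval ![z, j z, deriv j z, deriv (deriv j) z] r) w := by
  refine AnalyticAt.aeval_mvPolynomial (fun i => ?_) r
  fin_cases i
  · exact analyticAt_id
  · exact hj w hw
  · exact hj.deriv w hw
  · exact hj.deriv.deriv w hw

noncomputable def mobiusJet (τ j₀ j₁ j₂ : ℂ) (g : SL(2, ℂ)) : Fin 4 → ℂ :=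
  ![mobius g τ, j₀, j₁ * mobiusDenom g τ ^ 2,
    j₂ * mobiusDenom g τ ^ 4 + 2 * g 1 0 * j₁ * mobiusDenom g τ ^ 3]

theorem mobiusJet_intCast {j : ℂ → ℂ} (hj : DifferentiableOn ℂ j UpperHalfPlane.upperHalfPlaneSet)
    (hinv : ∀ (γ : SL(2, ℤ)) (z : ℂ), 0 < z.im → j (mobius γ z) = j z) {τ : ℂ} (hτ : 0 < τ.im)
    (γ : SL(2, ℤ)) :
    mobiusJet τ (j τ) (deriv j τ) (deriv (deriv j) τ) γ =
      ![mobius γ τ, j (mobius γ τ), deriv j (mobius γ τ), deriv (deriv j) (mobius γ τ)] := by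
  have hden (z : ℂ) (hz : 0 < z.im) := mobiusDenom_intCast_ne_zero γ hz
  have h1 := deriv_comp_mobius UpperHalfPlane.isOpen_upperHalfPlaneSet hj hden
    (mapsTo_mobius_intCast γ) (hinv γ) hτ
  have h2 := deriv_deriv_comp_mobius UpperHalfPlane.isOpen_upperHalfPlaneSet hj hden
    (mapsTo_mobius_intCast γ) (hinv γ) hτ
  ext i
  fin_cases i <;> simp [mobiusJet, h1, h2, hinv γ τ hτ]

theorem exists_eval_eq_mobiusDenom_pow_mul_eval_mobiusJet (τ j₀ j₁ j₂ : ℂ)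
    (p : MvPolynomial (Fin 4) ℂ) :
    ∃ (N : ℕ) (Q : MvPolynomial (Fin 2 × Fin 2) ℂ), ∀ g : SL(2, ℂ), mobiusDenom g τ ≠ 0 →
      eval (fun i => g i.1 i.2) Q = mobiusDenom g τ ^ N * eval (mobiusJet τ j₀ j₁ j₂ g) p := by
  let den : MvPolynomial (Fin 2 × Fin 2) ℂ := X (1, 0) * C τ + X (1, 1)
  obtain ⟨N, Q, hQ⟩ := exists_eval_eq_pow_mul_eval_update_div p 0 (X (0, 0) * C τ + X (0, 1)) den
    ![0, C j₀, C j₁ * den ^ 2, C j₂ * den ^ 4 + C 2 * X (1, 0) * C j₁ * den ^ 3]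
  refine ⟨N, Q, fun g hg => ?_⟩
  have hden : eval (fun i => g i.1 i.2) den = mobiusDenom g τ := by simp [den, mobiusDenom]
  rw [hQ _ (hden ▸ hg), hden]
  congr 1
  refine congrArg (eval · p) (funext fun i => ?_)
  fin_cases i <;> simp [mobiusJet, mobius, mobiusDenom, den]

theorem exists_mobiusJet_eq (τ j₀ : ℂ) {j₁ : ℂ} (hj₁ : j₁ ≠ 0) (j₂ : ℂ) {y : Fin 4 → ℂ}
    (hy₁ : y 1 = j₀) (hy₂ : y 2 ≠ 0) :
    ∃ g : SL(2, ℂ), mobiusDenom g τ ≠ 0 ∧ mobiusJet τ j₀ j₁ j₂ g = y := by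
  obtain ⟨t, ht⟩ := IsAlgClosed.exists_pow_nat_eq (y 2 / j₁) two_pos
  have ht0 : t ≠ 0 := by
    rintro rfl
    exact div_ne_zero hy₂ hj₁ (by simpa using ht.symm)
  obtain ⟨g, hc, hd, hw⟩ := exists_mobius_eq τ (y 0) ((y 3 - j₂ * t ^ 4) / (2 * j₁ * t ^ 3)) ht0
  refine ⟨g, hd ▸ ht0, ?_⟩
  funext i
  fin_cases i
  · exact hw
  · exact hy₁.symm
  · simp [mobiusJet, hd, ht]
    field_simp
  · simp [mobiusJet, hd, hc]
    field_simp
    ring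

theorem generic_order_at_unramified_point_general
    (j : ℂ → ℂ)
    (hol : ∀ z : ℂ, 0 < z.im → DifferentiableAt ℂ j z)
    (hinv : ∀ a b c d : ℤ, a * d - b * c = 1 → ∀ z : ℂ, 0 < z.im →
      j (((a : ℂ) * z + (b : ℂ)) / ((c : ℂ) * z + (d : ℂ))) = j z)
    (a : ℕ → ℤ)
    (p : MvPolynomial (Fin 4) ℂ)
    (τ : ℂ) (hτ : 0 < τ.im) (hj' : deriv j τ ≠ 0)
    (s : ℕ)
    (hdvd : (X 1 - MvPolynomial.C (j τ)) ^ s ∣ p)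
    (hnotdvd : ¬ (X 1 - MvPolynomial.C (j τ)) ^ (s + 1) ∣ p) :
    ∃ q : MvPolynomial (Fin 2 × Fin 2) ℂ,
      (∃ g : Matrix.SpecialLinearGroup (Fin 2) ℂ,
        eval (fun i => (g : Matrix (Fin 2) (Fin 2) ℂ) i.1 i.2) q ≠ 0) ∧
      ∀ γ : Matrix.SpecialLinearGroup (Fin 2) ℤ,
        eval (fun i => ((γ : Matrix (Fin 2) (Fin 2) ℤ) i.1 i.2 : ℂ)) q ≠ 0 →
        HasZeroOfOrder
          (fun z => eval (![z, j z, deriv j z, deriv (deriv j) z] : Fin 4 → ℂ) p)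
          ((((γ : Matrix (Fin 2) (Fin 2) ℤ) 0 0 : ℂ) * τ + ((γ : Matrix (Fin 2) (Fin 2) ℤ) 0 1 : ℂ)) /
            (((γ : Matrix (Fin 2) (Fin 2) ℤ) 1 0 : ℂ) * τ + ((γ : Matrix (Fin 2) (Fin 2) ℤ) 1 1 : ℂ)))
          s := by
  have hj : DifferentiableOn ℂ j UpperHalfPlane.upperHalfPlaneSet :=
    fun z hz => (hol z hz).differentiableWithinAt
  have hj_an := hj.analyticOnNhd UpperHalfPlane.isOpen_upperHalfPlaneSet
  have hinv_SL (γ : SL(2, ℤ)) (z : ℂ) (hz : 0 < z.im) : j (mobius γ z) = j z :=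
    hinv _ _ _ _ γ.det_fin_two_eq_one z hz
  obtain ⟨r, rfl⟩ := hdvd
  have hr : ¬ X 1 - C (j τ) ∣ r := fun ⟨u, hu⟩ => hnotdvd ⟨u, by rw [hu, pow_succ, mul_assoc]⟩
  obtain ⟨N, Q, hQ⟩ :=
    exists_eval_eq_mobiusDenom_pow_mul_eval_mobiusJet τ (j τ) (deriv j τ) (deriv (deriv j) τ) r
  refine ⟨Q, ?_, fun γ hγ => ?_⟩
  · obtain ⟨y, hy₁, hy₂, hy⟩ := exists_eval_ne_zero_of_not_X_sub_C_dvd hr (k := 2) (by decide)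
    obtain ⟨g, hg, rfl⟩ := exists_mobiusJet_eq τ (j τ) hj' (deriv (deriv j) τ) hy₁ hy₂
    exact ⟨g, by rw [hQ g hg]; exact mul_ne_zero (pow_ne_zero N hg) hy⟩
  change eval (fun i => (γ : SL(2, ℂ)) i.1 i.2) Q ≠ 0 at hγ
  change HasZeroOfOrder _ (mobius γ τ) s
  have hw := im_mobius_intCast_pos γ hτ
  have hden := mobiusDenom_intCast_ne_zero γ hτ
  have hjet := mobiusJet_intCast hj hinv_SL hτ γ
  rw [hQ γ hden, hjet] at hγ
  have hj'w : deriv j (mobius γ τ) ≠ 0 := by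
    rw [← show deriv j τ * mobiusDenom γ τ ^ 2 = deriv j (mobius γ τ) from congrFun hjet 2]
    exact mul_ne_zero hj' (pow_ne_zero 2 hden)
  convert hasZeroOfOrder_sub_pow_mul (hj_an _ hw) hj'w (analyticAt_eval_jet hj_an hw r)
    (right_ne_zero_of_mul hγ) s using 2 with z
  simp [hinv_SL γ τ hτ]

/-- For nonzero `p ∈ ℂ[X,Y₀,Y₁,Y₂]` and an unramified point `τ` of `j` (`j'(τ) ≠ 0`), with
`s` maximal such that `(Y₀ − j(τ))^s ∣ p`: for all `γ ∈ SL₂(ℤ)` outside a proper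
Zariski-closed subset of `SL₂(ℂ)`, the function `z ↦ p(z, j(z), j'(z), j''(z))` vanishes
to order exactly `s` at `z = γ·τ`.  Variables of `p`: `X=0, Y₀=1, Y₁=2, Y₂=3`. -/
theorem generic_order_at_unramified_point
    (j : ℂ → ℂ)
    (hol : ∀ z : ℂ, 0 < z.im → DifferentiableAt ℂ j z)
    (hinv : ∀ a b c d : ℤ, a * d - b * c = 1 → ∀ z : ℂ, 0 < z.im →
      j (((a : ℂ) * z + (b : ℂ)) / ((c : ℂ) * z + (d : ℂ))) = j z)
    (a : ℕ → ℤ)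
    (hq : ∀ z : ℂ, 0 < z.im →
      HasSum (fun k : ℕ => (a k : ℂ) * Complex.exp (2 * Real.pi * Complex.I * z) ^ (k + 1))
        (j z - (Complex.exp (2 * Real.pi * Complex.I * z))⁻¹ - 744))
    (p : MvPolynomial (Fin 4) ℂ) (hp : p ≠ 0)
    (τ : ℂ) (hτ : 0 < τ.im) (hj' : deriv j τ ≠ 0)
    (s : ℕ)
    (hdvd : (X 1 - MvPolynomial.C (j τ)) ^ s ∣ p)
    (hnotdvd : ¬ (X 1 - MvPolynomial.C (j τ)) ^ (s + 1) ∣ p) :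
    ∃ q : MvPolynomial (Fin 2 × Fin 2) ℂ,
      (∃ g : Matrix.SpecialLinearGroup (Fin 2) ℂ,
        eval (fun i => (g : Matrix (Fin 2) (Fin 2) ℂ) i.1 i.2) q ≠ 0) ∧
      ∀ γ : Matrix.SpecialLinearGroup (Fin 2) ℤ,
        eval (fun i => ((γ : Matrix (Fin 2) (Fin 2) ℤ) i.1 i.2 : ℂ)) q ≠ 0 →
        HasZeroOfOrder
          (fun z => eval (![z, j z, deriv j z, deriv (deriv j) z] : Fin 4 → ℂ) p)
          ((((γ : Matrix (Fin 2) (Fin 2) ℤ) 0 0 : ℂ) * τ + ((γ : Matrix (Fin 2) (Fin 2) ℤ) 0 1 : ℂ)) /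
            (((γ : Matrix (Fin 2) (Fin 2) ℤ) 1 0 : ℂ) * τ + ((γ : Matrix (Fin 2) (Fin 2) ℤ) 1 1 : ℂ)))
          s :=
  generic_order_at_unramified_point_general j hol hinv a p τ hτ hj' s hdvd hnotdvd
end
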